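/- arXiv:2301.10331 — 6 statements merged into one kernel-verified Lean document; each statement's English description precedes it below -/
import Mathlib

section
/- Let m = (m(n))_{n≥0} be a sequence of positive real numbers with m(0) = 1. Then m preserves Gevrey order if and only if m is a sequence of order 0, i.e. there exist constants a, A > 0 such that a^n ≤ m(n) ≤ A^n for every n ∈ ℕ. -/
open scoped Real

noncomputable section

/-- The open sector in direction `d` with opening `α` in `ℂ \ {0}`. -/
def Sector (d α : ℝ) : Set ℂ :=
  {z : ℂ | z ≠ 0 ∧ ∃ φ : ℝ, |φ - d| < α / 2 ∧
    z = ((‖z‖ : ℝ) : ℂ) * Complex.exp (φ * Complex.I)}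

/-- The disc-sector `S_d(α) ∪ D_r`. -/
def DiscSector (d α r : ℝ) : Set ℂ := Sector d α ∪ Metric.ball 0 r

variable {E : Type*} [NormedAddCommGroup E] [NormedSpace ℂ E]

/-- `f` has exponential growth of order at most `k` on the disc-sector `S_d(α) ∪ D_r`. -/
def ExpGrowthOn (k d α r : ℝ) (f : ℂ → E) : Prop :=
  ∀ α' ∈ Set.Ioo (0 : ℝ) α, ∀ r' ∈ Set.Ioo (0 : ℝ) r, ∃ A B : ℝ, 0 < A ∧ 0 < B ∧
    ∀ x ∈ DiscSector d α' r', ‖f x‖ ≤ A * Real.exp (B * ‖x‖ ^ k)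

/-- The power series with coefficients `c` has positive radius of convergence and its sum
near `0` extends to a holomorphic function on the disc-sector `S_d(α) ∪ D_r` of exponential
growth of order at most `k`. -/
def ExtendsOn (k d α r : ℝ) (c : ℕ → E) : Prop :=
  ∃ f : ℂ → E, DifferentiableOn ℂ f (DiscSector d α r) ∧ ExpGrowthOn k d α r f ∧
    ∃ ρ : ℝ, 0 < ρ ∧ ρ ≤ r ∧ ∀ t ∈ Metric.ball (0 : ℂ) ρ,
      HasSum (fun n : ℕ => t ^ n • c n) (f t)

/-- The power series with coefficients `c` has positive radius of convergence and its sum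
near `0` extends to a holomorphic function of exponential growth of order at most `k`
on some disc-sector in direction `d`. -/
def ExtendsToSector (k d : ℝ) (c : ℕ → E) : Prop :=
  ∃ α r : ℝ, 0 < α ∧ α < 2 * π ∧ 0 < r ∧ ExtendsOn k d α r c

/-- The formal power series `Σ aₙ tⁿ` is `k`-summable in direction `d`. -/
def KSummable (k d : ℝ) (a : ℕ → E) : Prop :=
  ExtendsToSector k d (fun n => ((Real.Gamma (1 + (n : ℝ) / k) : ℂ))⁻¹ • a n)

/-- The formal power series `Σ aₙ tⁿ` has Gevrey order `s`. -/
def GevreyOrder (s : ℝ) (a : ℕ → E) : Prop :=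
  ∃ B C : ℝ, 0 < B ∧ 0 < C ∧ ∀ n : ℕ, ‖a n‖ ≤ B * C ^ n * (n.factorial : ℝ) ^ s

/-- The sequence `m` preserves Gevrey order. -/
def PreservesGevreyOrder (m : ℕ → ℝ) : Prop :=
  ∀ s : ℝ, ∀ (E : Type) [NormedAddCommGroup E] [NormedSpace ℂ E] [CompleteSpace E],
    ∀ a : ℕ → E, GevreyOrder s a ↔ GevreyOrder s (fun n => ((m n : ℂ))⁻¹ • a n)

/-- The sequence `m` preserves summability. -/
def PreservesSummability (m : ℕ → ℝ) : Prop :=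
  ∀ k d : ℝ, 0 < k → ∀ (E : Type) [NormedAddCommGroup E] [NormedSpace ℂ E] [CompleteSpace E],
    ∀ a : ℕ → E, KSummable k d a ↔ KSummable k d (fun n => ((m n : ℂ))⁻¹ • a n)

end

private lemma aux_pow (B C : ℝ) (hC : 0 < C) :
    ∀ n : ℕ, n ≠ 0 → B * C ^ n ≤ (max 1 B * max 1 C) ^ n := by
  intro n hn
  rw [mul_pow]
  apply mul_le_mul
  · exact le_trans (le_max_right 1 B) (le_self_pow₀ (le_max_left 1 B) hn)
  · exact pow_le_pow_left₀ hC.le (le_max_right 1 C) n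
  · positivity
  · positivity

private lemma norm_inv_smul (m : ℝ) (hm : 0 < m) {E : Type*} [NormedAddCommGroup E]
    [NormedSpace ℂ E] (v : E) : ‖((m : ℂ))⁻¹ • v‖ = m⁻¹ * ‖v‖ := by
  rw [norm_smul, norm_inv, Complex.norm_real, Real.norm_of_nonneg hm.le]

/-- a sequence preserves Gevrey order iff it is a sequence of order `0`. -/
theorem stmt0 (m : ℕ → ℝ) (hpos : ∀ n, 0 < m n) (hm0 : m 0 = 1) :
    PreservesGevreyOrder m ↔
      ∃ a A : ℝ, 0 < a ∧ 0 < A ∧ ∀ n : ℕ, a ^ n ≤ m n ∧ m n ≤ A ^ n := by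
  constructor
  · intro h
    -- lower bound from constant sequence 1
    obtain ⟨B, C, hB, hC, hBC⟩ := (h 0 ℂ (fun _ => 1)).mp
      ⟨1, 1, one_pos, one_pos, fun n => by simp⟩
    -- upper bound from the sequence m itself
    obtain ⟨B', C', hB', hC', hBC'⟩ := (h 0 ℂ (fun n => (m n : ℂ))).mpr
      ⟨1, 1, one_pos, one_pos, fun n => by
        simp [smul_eq_mul, inv_mul_cancel₀ (Complex.ofReal_ne_zero.mpr (hpos n).ne')]⟩
    refine ⟨(max 1 B * max 1 C)⁻¹, max 1 B' * max 1 C', by positivity, by positivity, ?_⟩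
    intro n
    constructor
    · rcases Nat.eq_zero_or_pos n with rfl | hn
      · simp [hm0]
      · have h1 := hBC n
        rw [norm_inv_smul (m n) (hpos n), norm_one, mul_one, Real.rpow_zero, mul_one] at h1
        have h2 : (m n)⁻¹ ≤ (max 1 B * max 1 C) ^ n :=
          h1.trans (aux_pow B C hC n hn.ne')
        have h3 : ((max 1 B * max 1 C) ^ n)⁻¹ ≤ m n :=
          (inv_le_comm₀ (hpos n) (by positivity)).mp h2
        calc ((max 1 B * max 1 C)⁻¹) ^ n = ((max 1 B * max 1 C) ^ n)⁻¹ := by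
              rw [inv_pow]
          _ ≤ m n := h3
    · rcases Nat.eq_zero_or_pos n with rfl | hn
      · simp [hm0]
      · have h1 := hBC' n
        rw [Complex.norm_real, Real.norm_of_nonneg (hpos n).le, Real.rpow_zero,
          mul_one] at h1
        exact h1.trans (aux_pow B' C' hC' n hn.ne')
  · rintro ⟨a, A, ha, hA, hm⟩
    intro s E _ _ _ u
    constructor
    · rintro ⟨B, C, hB, hC, hBC⟩
      refine ⟨B, C / a, hB, by positivity, fun n => ?_⟩
      rw [norm_inv_smul (m n) (hpos n)]
      calc (m n)⁻¹ * ‖u n‖ ≤ (a ^ n)⁻¹ * (B * C ^ n * (n.factorial : ℝ) ^ s) := by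
            apply mul_le_mul
            · exact inv_anti₀ (by positivity) (hm n).1
            · exact hBC n
            · exact norm_nonneg _
            · positivity
        _ = B * (C / a) ^ n * (n.factorial : ℝ) ^ s := by
            rw [div_pow]
            field_simp
    · rintro ⟨B, C, hB, hC, hBC⟩
      refine ⟨B, A * C, hB, by positivity, fun n => ?_⟩
      have h1 := hBC n
      rw [norm_inv_smul (m n) (hpos n)] at h1
      have h2 : ‖u n‖ = m n * ((m n)⁻¹ * ‖u n‖) := by
        rw [← mul_assoc, mul_inv_cancel₀ (hpos n).ne', one_mul]
      rw [h2]
      calc m n * ((m n)⁻¹ * ‖u n‖) ≤ A ^ n * (B * C ^ n * (n.factorial : ℝ) ^ s) := by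
            apply mul_le_mul (hm n).2 h1 (mul_nonneg (inv_nonneg.mpr (hpos n).le) (norm_nonneg _)) (by positivity)
        _ = B * (A * C) ^ n * (n.factorial : ℝ) ^ s := by rw [mul_pow]; ring
end

section
/- For every q ∈ [0,1) the sequence ([n]_q!)_{n≥0} preserves summability: for every k > 0, every d ∈ ℝ, every complex Banach space E and every sequence (xₙ) in E, the formal power series Σ xₙtⁿ is k-summable in direction d if and only if the formal power series Σ (xₙ/[n]_q!)tⁿ is k-summable in direction d. -/
open scoped Real

/-- The `q`-analogue `[n]_q = 1 + q + ⋯ + q^(n-1)` of `n`. -/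
def qNat (q : ℝ) (n : ℕ) : ℝ := ∑ i ∈ Finset.range n, q ^ i

/-- The `q`-factorial `[n]_q! = [1]_q ⋯ [n]_q`. -/
def qFactorial (q : ℝ) : ℕ → ℝ
  | 0 => 1
  | n + 1 => qFactorial q n * qNat q (n + 1)
noncomputable section Aux

open Set Filter Complex

lemma arg_abs_mul_exp {ρ : ℝ} (hρ : 0 < ρ) {θ : ℝ} (hθ : θ ∈ Set.Ioc (-π) π) :
    ((ρ : ℂ) * Complex.exp ((θ : ℝ) * Complex.I)).arg = θ := by
  rw [Complex.arg_real_mul _ hρ, Complex.exp_mul_I]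
  exact Complex.arg_cos_add_sin_mul_I hθ

lemma mem_sector_iff {d α : ℝ} (hα : α < 2 * π) {z : ℂ} :
    z ∈ Sector d α ↔ z ≠ 0 ∧ (Complex.exp (-(d * Complex.I)) * z).arg ∈ Set.Ioo (-(α/2)) (α/2) := by
  constructor
  · rintro ⟨hz, φ, hφ, hzeq⟩
    refine ⟨hz, ?_⟩
    have habs : (0:ℝ) < ‖z‖ := by
      simpa using hz
    have hw : Complex.exp (-(d * Complex.I)) * z
        = ((‖z‖ : ℝ) : ℂ) * Complex.exp (((φ - d : ℝ) : ℂ) * Complex.I) := by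
      conv_lhs => rw [hzeq]
      rw [show Complex.exp (-(↑d * Complex.I)) * (((‖z‖ : ℝ) : ℂ) * Complex.exp (↑φ * Complex.I))
          = ((‖z‖ : ℝ) : ℂ) * (Complex.exp (-(↑d * Complex.I)) * Complex.exp (↑φ * Complex.I)) by ring,
        ← Complex.exp_add]
      congr 1
      push_cast
      ring
    have hφd : φ - d ∈ Set.Ioc (-π) π := by
      have h1 : |φ - d| < π := lt_of_lt_of_le hφ (by linarith)
      have h2 := abs_lt.mp h1
      exact ⟨by linarith [h2.1], by linarith [h2.2]⟩
    have harg : (Complex.exp (-(d * Complex.I)) * z).arg = φ - d := by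
      rw [hw]; exact arg_abs_mul_exp habs hφd
    rw [harg]
    have h2 := abs_lt.mp hφ
    exact ⟨by linarith [h2.1], by linarith [h2.2]⟩
  · rintro ⟨hz, harg⟩
    refine ⟨hz, (Complex.exp (-(d * Complex.I)) * z).arg + d, ?_, ?_⟩
    · rw [add_sub_cancel_right]
      exact abs_lt.mpr ⟨by linarith [harg.1], by linarith [harg.2]⟩
    · have h1 := Complex.norm_mul_exp_arg_mul_I (Complex.exp (-(d * Complex.I)) * z)
      have habs : ‖Complex.exp (-(d * Complex.I)) * z‖ = ‖z‖ := by
        rw [norm_mul, Complex.norm_exp]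
        simp
      rw [habs] at h1
      calc z = Complex.exp (d * Complex.I) * (Complex.exp (-(d * Complex.I)) * z) := by
              rw [← mul_assoc, ← Complex.exp_add]
              rw [show (d : ℂ) * Complex.I + -(d * Complex.I) = 0 by ring, Complex.exp_zero, one_mul]
        _ = Complex.exp (d * Complex.I) * (((‖z‖ : ℝ) : ℂ) *
              Complex.exp (((Complex.exp (-(d * Complex.I)) * z).arg : ℝ) * Complex.I)) := by rw [h1]
        _ = ((‖z‖ : ℝ) : ℂ) * (Complex.exp (d * Complex.I) *
              Complex.exp (((Complex.exp (-(d * Complex.I)) * z).arg : ℝ) * Complex.I)) := by ring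
        _ = ((‖z‖ : ℝ) : ℂ) * Complex.exp
              ((((Complex.exp (-(d * Complex.I)) * z).arg + d : ℝ) : ℂ) * Complex.I) := by
              rw [← Complex.exp_add]; congr 1; push_cast; ring

lemma isOpen_sector {d α : ℝ} (hα : α < 2 * π) : IsOpen (Sector d α) := by
  have hU : IsOpen (Complex.slitPlane ∩ Complex.arg ⁻¹' Set.Ioo (-(α/2)) (α/2)) := by
    refine ContinuousOn.isOpen_inter_preimage ?_ Complex.isOpen_slitPlane isOpen_Ioo
    exact fun x hx => (Complex.continuousAt_arg hx).continuousWithinAt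
  have heq : Sector d α
      = (fun z : ℂ => Complex.exp (-(d * Complex.I)) * z) ⁻¹'
        (Complex.slitPlane ∩ Complex.arg ⁻¹' Set.Ioo (-(α/2)) (α/2)) := by
    ext z
    rw [mem_sector_iff hα]
    simp only [Set.mem_preimage, Set.mem_inter_iff]
    constructor
    · rintro ⟨hz, harg⟩
      refine ⟨Complex.mem_slitPlane_iff_arg.mpr ⟨?_, ?_⟩, harg⟩
      · intro hpi
        rw [hpi] at harg
        have : α / 2 < π := by linarith
        exact absurd harg.2 (by linarith)
      · simpa using hz
    · rintro ⟨hsp, harg⟩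
      have hne := (Complex.mem_slitPlane_iff_arg.mp hsp).2
      have : z ≠ 0 := by
        intro h; rw [h, mul_zero] at hne; exact hne rfl
      exact ⟨this, harg⟩
  rw [heq]
  exact hU.preimage (continuous_const.mul continuous_id)

lemma isOpen_discSector {d α r : ℝ} (hα : α < 2 * π) : IsOpen (DiscSector d α r) :=
  (isOpen_sector hα).union Metric.isOpen_ball

lemma mul_mem_sector {d α : ℝ} {μ : ℝ} (hμ : 0 < μ) {z : ℂ} (hz : z ∈ Sector d α) :
    (μ : ℂ) * z ∈ Sector d α := by
  obtain ⟨hz0, φ, hφ, hzeq⟩ := hz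
  refine ⟨mul_ne_zero (by exact_mod_cast hμ.ne') hz0, φ, hφ, ?_⟩
  have : ‖(μ:ℂ) * z‖ = μ * ‖z‖ := by
    rw [norm_mul, Complex.norm_real, Real.norm_eq_abs, abs_of_pos hμ]
  rw [this]
  conv_lhs => rw [hzeq]
  push_cast
  ring

lemma mul_mem_discSector {d α : ℝ} {μ M r' : ℝ} (hμ0 : 0 ≤ μ) (hμM : μ ≤ M) (hM : 0 < M)
    (hr' : 0 < r') {t : ℂ} (ht : t ∈ DiscSector d α r') :
    (μ : ℂ) * t ∈ DiscSector d α (M * r') := by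
  rcases eq_or_lt_of_le hμ0 with h0 | hμpos
  · right
    rw [← h0]
    simp [Metric.mem_ball, mul_pos hM hr']
  rcases ht with hsec | hball
  · exact Or.inl (mul_mem_sector hμpos hsec)
  · right
    rw [Metric.mem_ball, dist_zero_right] at hball ⊢
    rw [norm_mul, Complex.norm_real, Real.norm_eq_abs, abs_of_pos hμpos]
    calc μ * ‖t‖ ≤ M * ‖t‖ := by gcongr
      _ < M * r' := by gcongr

end Aux
noncomputable section Transfer

open Set Filter Complex

variable {E : Type*} [NormedAddCommGroup E] [NormedSpace ℂ E] [CompleteSpace E]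

set_option maxHeartbeats 1000000 in
lemma transfer_ext {k d : ℝ} (hk : 0 < k) {c : ℕ → E} {β μ : ℕ → ℝ} {M : ℝ} (hM : 0 < M)
    (hμ0 : ∀ j, 0 ≤ μ j) (hμM : ∀ j, μ j ≤ M) (hβ : Summable (fun j => |β j|))
    {w : ℕ → ℝ} (hw : ∀ n, HasSum (fun j => β j * μ j ^ n) (w n))
    (h : ExtendsToSector k d c) :
    ExtendsToSector k d (fun n => ((w n : ℂ)) • c n) := by
  obtain ⟨α, r, hα0, hα2, hr0, f, hfd, hfg, ρ, hρ0, hρr, hρsum⟩ := h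
  set g : ℂ → E := fun t => ∑' j, (β j : ℂ) • f ((μ j : ℂ) * t) with hg
  have hDopen : IsOpen (DiscSector d α (r / M)) := isOpen_discSector hα2
  have hMrM : M * (r / M) = r := mul_div_cancel₀ r hM.ne'
  refine ⟨α, r / M, hα0, hα2, by positivity, g, ?_, ?_, ?_⟩
  · -- differentiability
    refine TendstoLocallyUniformlyOn.differentiableOn (F := fun (s : Finset ℕ) t =>
      ∑ j ∈ s, (β j : ℂ) • f ((μ j : ℂ) * t)) (φ := atTop) ?_ ?_ hDopen
    · rw [tendstoLocallyUniformlyOn_iff_forall_isCompact hDopen]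
      intro K hK hKc
      have hK' : IsCompact ((fun p : ℝ × ℂ => (p.1 : ℂ) * p.2) '' (Set.Icc 0 M ×ˢ K)) := by
        refine (isCompact_Icc.prod hKc).image ?_
        exact (Complex.continuous_ofReal.comp continuous_fst).mul continuous_snd
      have hKsub : ((fun p : ℝ × ℂ => (p.1 : ℂ) * p.2) '' (Set.Icc 0 M ×ˢ K)) ⊆
          DiscSector d α r := by
        rintro - ⟨⟨μ₀, t⟩, ⟨hμ₀, ht⟩, rfl⟩
        have := mul_mem_discSector hμ₀.1 hμ₀.2 hM (by positivity : (0:ℝ) < r / M) (hK ht)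
        rwa [hMrM] at this
      obtain ⟨C, hC⟩ := hK'.exists_bound_of_continuousOn (hfd.continuousOn.mono hKsub)
      exact tendstoUniformlyOn_tsum (u := fun j => |β j| * max C 0)
        (f := fun j t => (β j : ℂ) • f ((μ j : ℂ) * t)) (hβ.mul_right _) (s := K)
        (fun j t ht => by
          rw [norm_smul, Complex.norm_real, Real.norm_eq_abs]
          exact mul_le_mul_of_nonneg_left
            (le_trans (hC _ ⟨(μ j, t), ⟨⟨hμ0 j, hμM j⟩, ht⟩, rfl⟩) (le_max_left _ _))
            (abs_nonneg _))
    · filter_upwards with s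
      refine DifferentiableOn.fun_sum (fun j _ => DifferentiableOn.const_smul ?_ _)
      refine DifferentiableOn.comp hfd ?_ ?_
      · exact (differentiable_id.const_mul _).differentiableOn
      · intro t ht
        have := mul_mem_discSector (hμ0 j) (hμM j) hM (by positivity : (0:ℝ) < r / M) ht
        rwa [hMrM] at this
  · -- exponential growth
    intro α' hα' r' hr'
    obtain ⟨A, B, hA, hB, hbound⟩ := hfg α' hα' (M * r')
      ⟨mul_pos hM hr'.1, by rw [← hMrM]; exact (mul_lt_mul_iff_right₀ hM).2 hr'.2⟩
    have htsnn : (0:ℝ) ≤ ∑' j, |β j| := tsum_nonneg (fun j => abs_nonneg (β j))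
    refine ⟨A * (∑' j, |β j|) + A, B * M ^ k,
      add_pos_of_nonneg_of_pos (mul_nonneg hA.le htsnn) hA,
      mul_pos hB (Real.rpow_pos_of_pos hM k), fun x hx => ?_⟩
    have hterm : ∀ j, ‖(β j : ℂ) • f ((μ j : ℂ) * x)‖ ≤
        |β j| * (A * Real.exp (B * M ^ k * ‖x‖ ^ k)) := by
      intro j
      rw [norm_smul, Complex.norm_real, Real.norm_eq_abs]
      refine mul_le_mul_of_nonneg_left ?_ (abs_nonneg _)
      refine le_trans (hbound _ (mul_mem_discSector (hμ0 j) (hμM j) hM hr'.1 hx)) ?_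
      refine mul_le_mul_of_nonneg_left (Real.exp_le_exp.2 ?_) hA.le
      have habs : ‖(μ j : ℂ) * x‖ = μ j * ‖x‖ := by
        rw [norm_mul, Complex.norm_real, Real.norm_eq_abs, _root_.abs_of_nonneg (hμ0 j)]
      rw [habs, mul_assoc]
      refine mul_le_mul_of_nonneg_left ?_ hB.le
      calc (μ j * ‖x‖) ^ k ≤ (M * ‖x‖) ^ k := by
            refine Real.rpow_le_rpow (mul_nonneg (hμ0 j) (norm_nonneg x)) ?_ hk.le
            exact mul_le_mul_of_nonneg_right (hμM j) (norm_nonneg x)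
        _ = M ^ k * ‖x‖ ^ k := Real.mul_rpow hM.le (norm_nonneg x)
    have hsummable : Summable (fun j => ‖(β j : ℂ) • f ((μ j : ℂ) * x)‖) :=
      Summable.of_nonneg_of_le (fun j => norm_nonneg _) hterm (hβ.mul_right _)
    rw [hg]
    calc ‖∑' j, (β j : ℂ) • f ((μ j : ℂ) * x)‖
        ≤ ∑' j, ‖(β j : ℂ) • f ((μ j : ℂ) * x)‖ := norm_tsum_le_tsum_norm hsummable
      _ ≤ ∑' j, |β j| * (A * Real.exp (B * M ^ k * ‖x‖ ^ k)) :=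
          Summable.tsum_le_tsum hterm hsummable (hβ.mul_right _)
      _ = (∑' j, |β j|) * (A * Real.exp (B * M ^ k * ‖x‖ ^ k)) := tsum_mul_right
      _ ≤ (A * (∑' j, |β j|) + A) * Real.exp (B * M ^ k * ‖x‖ ^ k) := by
          have he : (0:ℝ) < Real.exp (B * M ^ k * ‖x‖ ^ k) := Real.exp_pos _
          nlinarith [htsnn]
  · -- power series near zero
    refine ⟨ρ / M, by positivity, by gcongr, fun t ht => ?_⟩
    rw [Metric.mem_ball, dist_zero_right] at ht
    have hMt : M * ‖t‖ < ρ := by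
      rw [← lt_div_iff₀' hM]
      exact ht
    set s₀ : ℝ := (M * ‖t‖ + ρ) / 2 with hs₀def
    have hs₀pos : 0 < s₀ := by positivity
    have hs₀lt : s₀ < ρ := by rw [hs₀def]; linarith
    have hMts₀ : M * ‖t‖ < s₀ := by rw [hs₀def]; linarith
    have hsumS := hρsum (s₀ : ℂ) (by
      rw [Metric.mem_ball, dist_zero_right, Complex.norm_real, Real.norm_eq_abs,
        abs_of_pos hs₀pos]
      exact hs₀lt)
    obtain ⟨D₀, hD₀⟩ : ∃ D₀ : ℝ, ∀ n, ‖(s₀ : ℂ) ^ n • c n‖ ≤ D₀ := by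
      obtain ⟨D₀, hD₀⟩ := (hsumS.summable.tendsto_atTop_zero.norm).bddAbove_range
      exact ⟨D₀, fun n => hD₀ ⟨n, by simp⟩⟩
    have hD₀0 : 0 ≤ D₀ := le_trans (norm_nonneg _) (hD₀ 0)
    set x₀ : ℝ := M * ‖t‖ / s₀ with hx₀def
    have hx₀0 : 0 ≤ x₀ := by positivity
    have hx₀1 : x₀ < 1 := (div_lt_one hs₀pos).2 hMts₀
    set h : ℕ × ℕ → E := fun p => ((β p.1 : ℂ) * (μ p.1 : ℂ) ^ p.2) • (t ^ p.2 • c p.2)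
      with hhdef
    have hnorm : ∀ p : ℕ × ℕ, ‖h p‖ ≤ |β p.1| * (x₀ ^ p.2 * D₀) := by
      rintro ⟨j, n⟩
      have heq : ‖h (j, n)‖ = |β j| * (μ j ^ n * (‖t‖ ^ n * ‖c n‖)) := by
        simp only [hhdef, norm_smul, norm_mul, norm_pow, Complex.norm_real, Real.norm_eq_abs,
          _root_.abs_of_nonneg (hμ0 j)]
        ring
      rw [heq]
      refine mul_le_mul_of_nonneg_left ?_ (abs_nonneg _)
      have hstep : μ j ^ n * (‖t‖ ^ n * ‖c n‖) ≤ (M * ‖t‖) ^ n * ‖c n‖ := by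
        calc μ j ^ n * (‖t‖ ^ n * ‖c n‖) ≤ M ^ n * (‖t‖ ^ n * ‖c n‖) :=
              mul_le_mul_of_nonneg_right (pow_le_pow_left₀ (hμ0 j) (hμM j) n) (by positivity)
          _ = (M * ‖t‖) ^ n * ‖c n‖ := by rw [mul_pow]; ring
      refine le_trans hstep ?_
      have hMt' : (M * ‖t‖ : ℝ) = x₀ * s₀ := by
        rw [hx₀def, div_mul_cancel₀ _ hs₀pos.ne']
      rw [hMt', mul_pow, mul_assoc]
      refine mul_le_mul_of_nonneg_left ?_ (pow_nonneg hx₀0 n)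
      calc s₀ ^ n * ‖c n‖ = ‖(s₀ : ℂ) ^ n • c n‖ := by
            rw [norm_smul, norm_pow, Complex.norm_real, Real.norm_eq_abs, abs_of_pos hs₀pos]
        _ ≤ D₀ := hD₀ n
    have hmaj : Summable (fun p : ℕ × ℕ => |β p.1| * (x₀ ^ p.2 * D₀)) :=
      Summable.mul_of_nonneg hβ ((summable_geometric_of_lt_one hx₀0 hx₀1).mul_right D₀)
        (fun j => abs_nonneg _) (fun n => mul_nonneg (pow_nonneg hx₀0 n) hD₀0)
    have hhnorm : Summable (fun p => ‖h p‖) :=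
      Summable.of_nonneg_of_le (fun p => norm_nonneg _) hnorm hmaj
    have hh : Summable h := hhnorm.of_norm
    have hinner : ∀ j : ℕ, HasSum (fun n => h (j, n)) ((β j : ℂ) • f ((μ j : ℂ) * t)) := by
      intro j
      have hmem : (μ j : ℂ) * t ∈ Metric.ball (0:ℂ) ρ := by
        rw [Metric.mem_ball, dist_zero_right, norm_mul, Complex.norm_real, Real.norm_eq_abs,
          _root_.abs_of_nonneg (hμ0 j)]
        calc μ j * ‖t‖ ≤ M * ‖t‖ := mul_le_mul_of_nonneg_right (hμM j) (norm_nonneg t)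
          _ < ρ := hMt
      have h1 := (hρsum _ hmem).const_smul ((β j : ℂ))
      have hfun : (fun n => (β j : ℂ) • (((μ j : ℂ) * t) ^ n • c n)) = fun n => h (j, n) := by
        funext n
        simp only [hhdef, smul_smul, mul_pow, mul_assoc]
      rw [hfun] at h1
      exact h1
    have hgt : ∑' p, h p = g t := by
      rw [Summable.tsum_prod' hh (fun j => (hinner j).summable), hg]
      exact tsum_congr (fun j => (hinner j).tsum_eq)
    have houter : ∀ n : ℕ, HasSum (fun j => h (j, n)) (t ^ n • ((w n : ℂ) • c n)) := by
      intro n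
      have h1 : HasSum (fun j => ((β j * μ j ^ n : ℝ) : ℂ)) ((w n : ℂ)) :=
        (hw n).mapL Complex.ofRealCLM
      have h2 := h1.smul_const (t ^ n • c n)
      have hfun : (fun j => ((β j * μ j ^ n : ℝ) : ℂ) • (t ^ n • c n)) = fun j => h (j, n) := by
        funext j
        simp only [hhdef]
        push_cast
        ring_nf
      rw [hfun] at h2
      rw [smul_comm]
      exact h2
    have hswap : HasSum (fun p : ℕ × ℕ => h (p.2, p.1)) (g t) := by
      have hs : Summable (fun p : ℕ × ℕ => h (p.2, p.1)) := hh.prod_symm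
      have hts : ∑' p : ℕ × ℕ, h (p.2, p.1) = ∑' p, h p := by
        have := Equiv.tsum_eq (Equiv.prodComm ℕ ℕ) h
        exact this
      have := hs.hasSum
      rwa [hts, hgt] at this
    exact hswap.prod_fiberwise houter

end Transfer
noncomputable section QPart

open Filter

/-- `eseq q j = q^j / ((1-q)(1-q²)⋯(1-q^j))`. -/
def eseq (q : ℝ) : ℕ → ℝ
  | 0 => 1
  | j + 1 => q * eseq q j / (1 - q ^ (j + 1))

/-- `dseq q j = (-1)^j q^(j(j+1)/2) / ((1-q)(1-q²)⋯(1-q^j))`. -/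
def dseq (q : ℝ) : ℕ → ℝ
  | 0 => 1
  | j + 1 => -(q ^ (j + 1) * dseq q j) / (1 - q ^ (j + 1))

variable {q : ℝ}

lemma one_sub_qpow_pos (hq0 : 0 ≤ q) (hq1 : q < 1) (j : ℕ) : 0 < 1 - q ^ (j + 1) := by
  have h : q ^ (j + 1) < 1 := pow_lt_one₀ hq0 hq1 (by omega)
  linarith

lemma eseq_rec (hq0 : 0 ≤ q) (hq1 : q < 1) (j : ℕ) :
    eseq q (j + 1) * (1 - q ^ (j + 1)) = q * eseq q j := by
  rw [eseq, div_mul_cancel₀ _ (one_sub_qpow_pos hq0 hq1 j).ne']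

lemma dseq_rec (hq0 : 0 ≤ q) (hq1 : q < 1) (j : ℕ) :
    dseq q (j + 1) * (1 - q ^ (j + 1)) = -(q ^ (j + 1) * dseq q j) := by
  rw [dseq, div_mul_cancel₀ _ (one_sub_qpow_pos hq0 hq1 j).ne']

lemma eseq_nonneg (hq0 : 0 ≤ q) (hq1 : q < 1) : ∀ j, 0 ≤ eseq q j
  | 0 => zero_le_one
  | j + 1 => by
      rw [eseq]
      have := one_sub_qpow_pos hq0 hq1 j
      have := eseq_nonneg hq0 hq1 j
      positivity

lemma summable_abs_of_ratio (hq0 : 0 ≤ q) (hq1 : q < 1) {u : ℕ → ℝ}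
    (hu : ∀ j, |u (j + 1)| ≤ q / (1 - q ^ (j + 1)) * |u j|) :
    Summable fun j => |u j| := by
  refine summable_of_ratio_norm_eventually_le (r := (1 + q) / 2) (by linarith) ?_
  have htend := tendsto_pow_atTop_nhds_zero_of_lt_one hq0 hq1
  have hden : (0:ℝ) < 2 * (1 + q) := by linarith
  have hev : ∀ᶠ j in atTop, q ^ j < (1 - q) / (2 * (1 + q)) :=
    htend.eventually_lt_const (div_pos (by linarith) hden)
  filter_upwards [hev] with j hj
  rw [Real.norm_eq_abs, Real.norm_eq_abs, abs_abs, abs_abs]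
  refine le_trans (hu j) (mul_le_mul_of_nonneg_right ?_ (abs_nonneg _))
  have hpos := one_sub_qpow_pos hq0 hq1 j
  rw [div_le_div_iff₀ hpos two_pos]
  have hqj1 : q ^ (j + 1) ≤ q ^ j := by
    rw [pow_succ]
    nlinarith [pow_nonneg hq0 j]
  have hj' : q ^ j * (2 * (1 + q)) < 1 - q := (lt_div_iff₀ hden).1 hj
  have hprod : (1 + q) * q ^ (j + 1) ≤ (1 + q) * q ^ j :=
    mul_le_mul_of_nonneg_left hqj1 (by linarith)
  nlinarith [hprod, hj']

lemma summable_abs_eseq (hq0 : 0 ≤ q) (hq1 : q < 1) : Summable fun j => |eseq q j| := by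
  refine summable_abs_of_ratio hq0 hq1 (fun j => ?_)
  have hpos := one_sub_qpow_pos hq0 hq1 j
  rw [eseq, abs_div, abs_mul, abs_of_nonneg hq0, abs_of_pos hpos, div_mul_eq_mul_div]

lemma summable_abs_dseq (hq0 : 0 ≤ q) (hq1 : q < 1) : Summable fun j => |dseq q j| := by
  refine summable_abs_of_ratio hq0 hq1 (fun j => ?_)
  have hpos := one_sub_qpow_pos hq0 hq1 j
  have hqj : q ^ (j + 1) ≤ q := by
    calc q ^ (j + 1) ≤ q ^ 1 := pow_le_pow_of_le_one hq0 hq1.le (by omega)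
      _ = q := pow_one q
  rw [dseq, abs_div, abs_neg, abs_mul, abs_of_pos hpos, abs_of_nonneg (pow_nonneg hq0 _),
    div_mul_eq_mul_div]
  gcongr


lemma summable_pow_mul (hq0 : 0 ≤ q) (hq1 : q < 1) {u : ℕ → ℝ}
    (hu : Summable fun j => |u j|) (n : ℕ) : Summable fun j => u j * q ^ (n * j) := by
  refine Summable.of_norm_bounded hu (fun j => ?_)
  rw [Real.norm_eq_abs, abs_mul, abs_of_nonneg (pow_nonneg hq0 _)]
  calc |u j| * q ^ (n * j) ≤ |u j| * 1 :=
        mul_le_mul_of_nonneg_left (pow_le_one₀ hq0 hq1.le) (abs_nonneg _)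
    _ = |u j| := mul_one _

/-- `Rq q n = ∑_j eseq q j · q^(nj)`. -/
def Rq (q : ℝ) (n : ℕ) : ℝ := ∑' j, eseq q j * q ^ (n * j)

/-- `Qq q n = ∑_j dseq q j · q^(nj)`. -/
def Qq (q : ℝ) (n : ℕ) : ℝ := ∑' j, dseq q j * q ^ (n * j)

lemma Rq_succ (hq0 : 0 ≤ q) (hq1 : q < 1) (n : ℕ) :
    Rq q (n + 1) = (1 - q ^ (n + 1)) * Rq q n := by
  have hsum : ∀ m, Summable fun j => eseq q j * q ^ (m * j) :=
    fun m => summable_pow_mul hq0 hq1 (summable_abs_eseq hq0 hq1) m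
  have hsa : Summable (fun j => eseq q j * q ^ (n * j) - eseq q j * q ^ ((n + 1) * j)) :=
    (hsum n).sub (hsum (n + 1))
  have key : Rq q n - Rq q (n + 1) = q ^ (n + 1) * Rq q n := by
    calc Rq q n - Rq q (n + 1)
        = ∑' j, (eseq q j * q ^ (n * j) - eseq q j * q ^ ((n + 1) * j)) := by
          rw [Rq, Rq, Summable.tsum_sub (hsum n) (hsum (n + 1))]
      _ = (eseq q 0 * q ^ (n * 0) - eseq q 0 * q ^ ((n + 1) * 0))
          + ∑' j, (eseq q (j + 1) * q ^ (n * (j + 1)) - eseq q (j + 1) * q ^ ((n + 1) * (j + 1))) :=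
          Summable.tsum_eq_zero_add hsa
      _ = ∑' j, q ^ (n + 1) * (eseq q j * q ^ (n * j)) := by
          rw [show (eseq q 0 * q ^ (n * 0) - eseq q 0 * q ^ ((n + 1) * 0)) = 0 by simp, zero_add]
          refine tsum_congr (fun j => ?_)
          linear_combination (q : ℝ) ^ (n * (j + 1)) * eseq_rec hq0 hq1 j
      _ = q ^ (n + 1) * Rq q n := by rw [tsum_mul_left, Rq]
  linarith

lemma Qq_succ (hq0 : 0 ≤ q) (hq1 : q < 1) (n : ℕ) :
    Qq q n = (1 - q ^ (n + 1)) * Qq q (n + 1) := by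
  have hsum : ∀ m, Summable fun j => dseq q j * q ^ (m * j) :=
    fun m => summable_pow_mul hq0 hq1 (summable_abs_dseq hq0 hq1) m
  have hsa : Summable (fun j => dseq q j * q ^ (n * j) - dseq q j * q ^ ((n + 1) * j)) :=
    (hsum n).sub (hsum (n + 1))
  have key : Qq q n - Qq q (n + 1) = -(q ^ (n + 1) * Qq q (n + 1)) := by
    calc Qq q n - Qq q (n + 1)
        = ∑' j, (dseq q j * q ^ (n * j) - dseq q j * q ^ ((n + 1) * j)) := by
          rw [Qq, Qq, Summable.tsum_sub (hsum n) (hsum (n + 1))]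
      _ = (dseq q 0 * q ^ (n * 0) - dseq q 0 * q ^ ((n + 1) * 0))
          + ∑' j, (dseq q (j + 1) * q ^ (n * (j + 1)) - dseq q (j + 1) * q ^ ((n + 1) * (j + 1))) :=
          Summable.tsum_eq_zero_add hsa
      _ = ∑' j, -(q ^ (n + 1) * (dseq q j * q ^ ((n + 1) * j))) := by
          rw [show (dseq q 0 * q ^ (n * 0) - dseq q 0 * q ^ ((n + 1) * 0)) = 0 by simp, zero_add]
          refine tsum_congr (fun j => ?_)
          linear_combination (q : ℝ) ^ (n * (j + 1)) * dseq_rec hq0 hq1 j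
      _ = -(q ^ (n + 1) * Qq q (n + 1)) := by
          rw [tsum_neg, tsum_mul_left, Qq]
  linarith

lemma Rq_eq_prod (hq0 : 0 ≤ q) (hq1 : q < 1) (n : ℕ) :
    Rq q n = (∏ i ∈ Finset.range n, (1 - q ^ (i + 1))) * Rq q 0 := by
  induction n with
  | zero => simp
  | succ n ih =>
      rw [Rq_succ hq0 hq1 n, ih, Finset.prod_range_succ]
      ring

lemma Qq_zero_eq (hq0 : 0 ≤ q) (hq1 : q < 1) (n : ℕ) :
    Qq q 0 = (∏ i ∈ Finset.range n, (1 - q ^ (i + 1))) * Qq q n := by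
  induction n with
  | zero => simp
  | succ n ih =>
      rw [ih, Qq_succ hq0 hq1 n, Finset.prod_range_succ]
      ring

lemma Rq_zero_pos (hq0 : 0 ≤ q) (hq1 : q < 1) : 0 < Rq q 0 := by
  have hsum : Summable fun j => eseq q j * q ^ (0 * j) :=
    summable_pow_mul hq0 hq1 (summable_abs_eseq hq0 hq1) 0
  have h1 : (1 : ℝ) ≤ Rq q 0 := by
    have h2 := Summable.le_tsum hsum 0 (fun j _ => by
      have := eseq_nonneg hq0 hq1 j
      positivity)
    rw [Rq]
    simpa [eseq] using h2
  linarith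

lemma prod_one_sub_pow_pos (hq0 : 0 ≤ q) (hq1 : q < 1) (n : ℕ) :
    0 < ∏ i ∈ Finset.range n, (1 - q ^ (i + 1)) :=
  Finset.prod_pos (fun i _ => one_sub_qpow_pos hq0 hq1 i)

set_option maxHeartbeats 1000000 in
lemma Qq_zero_pos (hq0 : 0 ≤ q) (hq1 : q < 1) : 0 < Qq q 0 := by
  have hTd : Summable fun j => |dseq q j| := summable_abs_dseq hq0 hq1
  have hTd' : Summable fun j => |dseq q (j + 1)| := by
    exact (summable_nat_add_iff (f := fun j => |dseq q j|) 1).2 hTd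
  set T : ℝ := ∑' j, |dseq q (j + 1)| with hT
  have hT0 : 0 ≤ T := tsum_nonneg (fun j => abs_nonneg _)
  have htend := tendsto_pow_atTop_nhds_zero_of_lt_one hq0 hq1
  obtain ⟨n, hn⟩ := (htend.eventually_lt_const (show (0:ℝ) < 1 / (T + 1) by positivity)).exists
  have hsum : Summable fun j => dseq q j * q ^ (n * j) :=
    summable_pow_mul hq0 hq1 hTd n
  have hsum' : Summable fun j => dseq q (j + 1) * q ^ (n * (j + 1)) :=
    (summable_nat_add_iff (f := fun j => dseq q j * q ^ (n * j)) 1).2 hsum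
  have htail : |∑' j, dseq q (j + 1) * q ^ (n * (j + 1))| ≤ q ^ n * T := by
    rw [← Real.norm_eq_abs]
    refine le_trans (norm_tsum_le_tsum_norm
      (by simp only [Real.norm_eq_abs]; exact hsum'.abs)) ?_
    simp only [Real.norm_eq_abs]
    have hle : ∀ j, |dseq q (j + 1) * q ^ (n * (j + 1))| ≤ |dseq q (j + 1)| * q ^ n := by
      intro j
      rw [abs_mul, abs_of_nonneg (pow_nonneg hq0 _)]
      refine mul_le_mul_of_nonneg_left ?_ (abs_nonneg _)
      exact pow_le_pow_of_le_one hq0 hq1.le (Nat.le_mul_of_pos_right n (Nat.succ_pos j))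
    calc ∑' j, |dseq q (j + 1) * q ^ (n * (j + 1))|
        ≤ ∑' j, |dseq q (j + 1)| * q ^ n :=
          Summable.tsum_le_tsum hle (hsum'.abs) (hTd'.mul_right _)
      _ = T * q ^ n := tsum_mul_right
      _ = q ^ n * T := mul_comm _ _
  have hQn : Qq q n = 1 + ∑' j, dseq q (j + 1) * q ^ (n * (j + 1)) := by
    rw [Qq, Summable.tsum_eq_zero_add hsum]
    simp [dseq]
  have hqnT : q ^ n * T < 1 := by
    have hqn : q ^ n < 1 / (T + 1) := hn
    have hqn0 : 0 ≤ q ^ n := pow_nonneg hq0 n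
    rw [lt_div_iff₀ (by positivity : (0:ℝ) < T + 1)] at hqn
    nlinarith
  have hQnpos : 0 < Qq q n := by
    rw [hQn]
    have := abs_le.mp htail
    linarith [this.1]
  rw [Qq_zero_eq hq0 hq1 n]
  exact mul_pos (prod_one_sub_pow_pos hq0 hq1 n) hQnpos

lemma qNat_one_le (hq0 : 0 ≤ q) (n : ℕ) : (1 : ℝ) ≤ qNat q (n + 1) := by
  have := Finset.single_le_sum (f := fun i => q ^ i)
    (fun i _ => pow_nonneg hq0 i) (Finset.mem_range.2 (Nat.succ_pos n))
  simpa [qNat] using this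

lemma qFactorial_pos (hq0 : 0 ≤ q) : ∀ n, 0 < qFactorial q n
  | 0 => one_pos
  | n + 1 => by
      rw [qFactorial]
      exact mul_pos (qFactorial_pos hq0 n) (lt_of_lt_of_le one_pos (qNat_one_le hq0 n))

lemma prod_eq_qFactorial (hq1 : q < 1) (n : ℕ) :
    (∏ i ∈ Finset.range n, (1 - q ^ (i + 1))) = (1 - q) ^ n * qFactorial q n := by
  induction n with
  | zero => simp [qFactorial]
  | succ n ih =>
      rw [Finset.prod_range_succ, ih, qFactorial]
      have hgeom : (1 - q) * qNat q (n + 1) = 1 - q ^ (n + 1) := by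
        have := geom_sum_mul q (n + 1)
        rw [qNat]
        linear_combination -this
      linear_combination -((1 - q) ^ n * qFactorial q n) * hgeom

lemma hasSum_qFactorial (hq0 : 0 ≤ q) (hq1 : q < 1) (n : ℕ) :
    HasSum (fun j => (eseq q j / Rq q 0) * (q ^ j / (1 - q)) ^ n) (qFactorial q n) := by
  have h1 : HasSum (fun j => eseq q j * q ^ (n * j)) (Rq q n) :=
    (summable_pow_mul hq0 hq1 (summable_abs_eseq hq0 hq1) n).hasSum
  have h2 := h1.div_const (Rq q 0 * (1 - q) ^ n)
  have hR0 : Rq q 0 ≠ 0 := (Rq_zero_pos hq0 hq1).ne'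
  have h1q : (1 - q : ℝ) ≠ 0 := by linarith
  have hfun : (fun j => eseq q j * q ^ (n * j) / (Rq q 0 * (1 - q) ^ n))
      = fun j => (eseq q j / Rq q 0) * (q ^ j / (1 - q)) ^ n := by
    funext j
    rw [div_pow, ← pow_mul, mul_comm j n]
    field_simp
  have hval : Rq q n / (Rq q 0 * (1 - q) ^ n) = qFactorial q n := by
    rw [Rq_eq_prod hq0 hq1 n, prod_eq_qFactorial hq1 n]
    field_simp
  rw [hfun, hval] at h2
  exact h2

lemma hasSum_qFactorial_inv (hq0 : 0 ≤ q) (hq1 : q < 1) (n : ℕ) :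
    HasSum (fun j => (dseq q j / Qq q 0) * ((1 - q) * q ^ j) ^ n) ((qFactorial q n)⁻¹) := by
  have h1 : HasSum (fun j => dseq q j * q ^ (n * j)) (Qq q n) :=
    (summable_pow_mul hq0 hq1 (summable_abs_dseq hq0 hq1) n).hasSum
  have h2 := (h1.div_const (Qq q 0)).mul_left ((1 - q) ^ n)
  have hQ0 : Qq q 0 ≠ 0 := (Qq_zero_pos hq0 hq1).ne'
  have h1q : (1 - q : ℝ) ≠ 0 := by linarith
  have hqF : qFactorial q n ≠ 0 := (qFactorial_pos hq0 n).ne'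
  have hP : (∏ i ∈ Finset.range n, (1 - q ^ (i + 1))) ≠ 0 :=
    (prod_one_sub_pow_pos hq0 hq1 n).ne'
  have hfun : (fun j => (1 - q) ^ n * (dseq q j * q ^ (n * j) / Qq q 0))
      = fun j => (dseq q j / Qq q 0) * ((1 - q) * q ^ j) ^ n := by
    funext j
    rw [mul_pow, ← pow_mul, mul_comm j n]
    field_simp
  have hQnne : Qq q n ≠ 0 := by
    intro h
    rw [Qq_zero_eq hq0 hq1 n, h, mul_zero] at hQ0
    exact hQ0 rfl
  have hval : (1 - q) ^ n * (Qq q n / Qq q 0) = (qFactorial q n)⁻¹ := by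
    rw [Qq_zero_eq hq0 hq1 n, prod_eq_qFactorial hq1 n]
    field_simp
  rw [hfun, hval] at h2
  exact h2

end QPart
/-- the sequence `([n]_q!)` preserves summability for `q ∈ [0,1)`. -/
theorem stmt2 (q : ℝ) (hq0 : 0 ≤ q) (hq1 : q < 1) :
    ∀ k d : ℝ, 0 < k →
      ∀ (E : Type) [NormedAddCommGroup E] [NormedSpace ℂ E] [CompleteSpace E],
        ∀ x : ℕ → E,
          KSummable k d x ↔ KSummable k d (fun n => ((qFactorial q n : ℂ))⁻¹ • x n) := by
  intro k d hk E _ _ _ x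
  have h1q : (0:ℝ) < 1 - q := by linarith
  have hqF : ∀ n, qFactorial q n ≠ 0 := fun n => (qFactorial_pos hq0 n).ne'
  constructor
  · intro hx
    have hβ : Summable (fun j => |dseq q j / Qq q 0|) := by
      refine ((summable_abs_dseq hq0 hq1).div_const |Qq q 0|).congr (fun j => ?_)
      rw [abs_div]
    have hres := transfer_ext (E := E) hk (M := 1) one_pos
      (μ := fun j => (1 - q) * q ^ j)
      (fun j => by positivity)
      (fun j => mul_le_one₀ (by linarith) (pow_nonneg hq0 j) (pow_le_one₀ hq0 hq1.le))
      hβ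
      (w := fun n => (qFactorial q n)⁻¹)
      (fun n => hasSum_qFactorial_inv hq0 hq1 n) hx
    have heq : (fun n : ℕ => ((((qFactorial q n)⁻¹ : ℝ)) : ℂ) •
          (((Real.Gamma (1 + (n : ℝ) / k) : ℂ))⁻¹ • x n))
        = fun n : ℕ => ((Real.Gamma (1 + (n : ℝ) / k) : ℂ))⁻¹ •
          (((qFactorial q n : ℂ))⁻¹ • x n) := by
      funext n
      rw [Complex.ofReal_inv, smul_comm]
    show ExtendsToSector k d (fun n : ℕ => ((Real.Gamma (1 + (n : ℝ) / k) : ℂ))⁻¹ •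
      (((qFactorial q n : ℂ))⁻¹ • x n))
    exact heq ▸ hres
  · intro hy
    have hβ : Summable (fun j => |eseq q j / Rq q 0|) := by
      refine ((summable_abs_eseq hq0 hq1).div_const |Rq q 0|).congr (fun j => ?_)
      rw [abs_div]
    have hres := transfer_ext (E := E) hk (M := 1 / (1 - q)) (one_div_pos.2 h1q)
      (μ := fun j => q ^ j / (1 - q))
      (fun j => by positivity)
      (fun j => by
        rw [div_le_div_iff₀ h1q h1q]
        nlinarith [pow_le_one₀ hq0 hq1.le (n := j)])
      hβ
      (w := fun n => qFactorial q n)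
      (fun n => hasSum_qFactorial hq0 hq1 n) hy
    have heq : (fun n : ℕ => (((qFactorial q n : ℝ)) : ℂ) •
          (((Real.Gamma (1 + (n : ℝ) / k) : ℂ))⁻¹ • (((qFactorial q n : ℂ))⁻¹ • x n)))
        = fun n : ℕ => ((Real.Gamma (1 + (n : ℝ) / k) : ℂ))⁻¹ • x n := by
      funext n
      have hne : (qFactorial q n : ℂ) ≠ 0 := Complex.ofReal_ne_zero.mpr (hqF n)
      rw [smul_comm, smul_smul, smul_smul, mul_assoc, mul_inv_cancel₀ hne, mul_one]
    show ExtendsToSector k d (fun n : ℕ => ((Real.Gamma (1 + (n : ℝ) / k) : ℂ))⁻¹ • x n)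
    exact heq ▸ hres
end

section
/- Let q ∈ (0,1), k > 0, d ∈ ℝ and let E be a complex Banach space. Let ψ̃ be an E-valued function holomorphic on a disc-sector Ŝ_d = S_d(α) ∪ D_r with exponential growth of order at most k. Then the power series φ(z) = Σ_{n≥0} [n]_q!·ψ̃^{(n)}(0)·zⁿ/n! has positive radius of convergence and its sum near 0 extends to a holomorphic function on some disc-sector Ŝ'_d in the same direction d with exponential growth of order at most k. -/
open scoped Real

namespace Stmt4Aux


lemma sector_mono {d a a' : ℝ} (h : a ≤ a') : Sector d a ⊆ Sector d a' := by
  rintro z ⟨hz, φ, hφ, hrep⟩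
  exact ⟨hz, φ, lt_of_lt_of_le hφ (by linarith), hrep⟩

lemma discSector_mono {d a a' r r' : ℝ} (ha : a ≤ a') (hr : r ≤ r') :
    DiscSector d a r ⊆ DiscSector d a' r' := by
  rintro z (hz | hz)
  · exact Or.inl (sector_mono ha hz)
  · exact Or.inr (Metric.ball_subset_ball hr hz)

lemma sector_smul {d a : ℝ} {c : ℝ} (hc : 0 < c) {z : ℂ} (hz : z ∈ Sector d a) :
    (c : ℂ) * z ∈ Sector d a := by
  obtain ⟨hz0, φ, hφ, hrep⟩ := hz
  refine ⟨mul_ne_zero (by exact_mod_cast hc.ne') hz0, φ, hφ, ?_⟩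
  have habs : (‖(c : ℂ) * z‖ : ℝ) = c * ‖z‖ := by
    rw [norm_mul, Complex.norm_real, Real.norm_eq_abs, abs_of_pos hc]
  rw [habs]
  push_cast
  rw [mul_assoc]
  rw [← hrep]

lemma isOpen_sector (d a : ℝ) : IsOpen (Sector d a) := by
  rw [isOpen_iff_mem_nhds]
  rintro z₀ ⟨hz0, φ₀, hφ₀, hrep⟩
  set g : ℂ → ℂ := fun z => z * Complex.exp (-(φ₀ : ℂ) * Complex.I) with hg
  have hgcont : Continuous g := continuous_id.mul continuous_const
  have hgz₀ : g z₀ = (‖z₀‖ : ℂ) := by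
    rw [hg]
    simp only []
    conv_lhs => rw [hrep]
    rw [mul_assoc, ← Complex.exp_add]
    have : (φ₀ : ℂ) * Complex.I + -(φ₀ : ℂ) * Complex.I = 0 := by ring
    rw [this, Complex.exp_zero, mul_one]
  have habs_pos : 0 < ‖z₀‖ := by
    simpa [norm_pos_iff] using hz0
  set ε := a / 2 - |φ₀ - d| with hε
  have hεpos : 0 < ε := by simp [hε]; linarith
  -- eventually: re (g z) > 0 and |arg (g z)| < ε
  have hre : ∀ᶠ z in nhds z₀, 0 < (g z).re := by
    have hc : ContinuousAt (fun z => (g z).re) z₀ := (Complex.continuous_re.comp hgcont).continuousAt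
    have h0 : 0 < (g z₀).re := by rw [hgz₀]; simpa using habs_pos
    exact hc.eventually (eventually_gt_nhds h0)
  have harg0 : Complex.arg (g z₀) = 0 := by
    rw [hgz₀]
    exact Complex.arg_ofReal_of_nonneg (norm_nonneg z₀)
  have hargcont : ContinuousAt (fun z => Complex.arg (g z)) z₀ := by
    refine (Complex.continuousAt_arg ?_).comp hgcont.continuousAt
    rw [hgz₀]
    exact Complex.mem_slitPlane_iff.mpr (Or.inl (by simpa using habs_pos))
  have harg : ∀ᶠ z in nhds z₀, |Complex.arg (g z)| < ε := by
    have ht : Filter.Tendsto (fun z => |Complex.arg (g z)|) (nhds z₀) (nhds 0) := by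
      have h' := hargcont.tendsto
      rw [harg0] at h'
      simpa using h'.abs
    exact ht.eventually (eventually_lt_nhds hεpos)
  filter_upwards [hre, harg] with z hz1 hz2
  have hgz_ne : g z ≠ 0 := by
    intro hcon
    rw [hcon] at hz1
    simp at hz1
  have hzne : z ≠ 0 := by
    intro hcon
    rw [hg] at hgz_ne
    simp [hcon] at hgz_ne
  refine ⟨hzne, φ₀ + Complex.arg (g z), ?_, ?_⟩
  · have : |φ₀ + Complex.arg (g z) - d| ≤ |φ₀ - d| + |Complex.arg (g z)| := by
      have := abs_add_le (φ₀ - d) (Complex.arg (g z))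
      rw [show φ₀ + Complex.arg (g z) - d = φ₀ - d + Complex.arg (g z) by ring]
      exact this
    rw [hε] at hz2
    linarith
  · have hrep' : g z = (‖g z‖ : ℂ) * Complex.exp ((Complex.arg (g z) : ℂ) * Complex.I) :=
      (Complex.norm_mul_exp_arg_mul_I (g z)).symm
    have habsg : ‖g z‖ = ‖z‖ := by
      rw [hg]
      simp only []
      rw [norm_mul]
      have : ‖Complex.exp (-(φ₀:ℂ) * Complex.I)‖ = 1 := by
        have : (-(φ₀:ℂ)) * Complex.I = ((-φ₀ : ℝ) : ℂ) * Complex.I := by push_cast; ring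
        rw [this, Complex.norm_exp_ofReal_mul_I]
      rw [this, mul_one]
    have hz_eq : z = g z * Complex.exp ((φ₀ : ℂ) * Complex.I) := by
      rw [hg]
      simp only []
      rw [mul_assoc, ← Complex.exp_add]
      have : -(φ₀:ℂ) * Complex.I + (φ₀:ℂ) * Complex.I = 0 := by ring
      rw [this, Complex.exp_zero, mul_one]
    conv_lhs => rw [hz_eq, hrep', habsg]
    rw [mul_assoc, ← Complex.exp_add]
    congr 1
    push_cast
    ring




def P (q : ℝ) (n : ℕ) : ℝ := ∏ i ∈ Finset.range n, (1 - q ^ (i + 1))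

variable {q : ℝ} (hq0 : 0 < q) (hq1 : q < 1)

lemma P_succ (n : ℕ) : P q (n + 1) = P q n * (1 - q ^ (n + 1)) := by
  simp [P, Finset.prod_range_succ]

include hq0 hq1 in
lemma P_pos (n : ℕ) : 0 < P q n := by
  refine Finset.prod_pos fun i _ => ?_
  have : q ^ (i+1) < 1 := pow_lt_one₀ hq0.le hq1 (Nat.succ_ne_zero i)
  linarith

include hq0 hq1 in
lemma P_le_one (n : ℕ) : P q n ≤ 1 := by
  refine Finset.prod_le_one (fun i _ => ?_) (fun i _ => ?_)
  · have : q ^ (i+1) < 1 := pow_lt_one₀ hq0.le hq1 (Nat.succ_ne_zero i)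
    linarith
  · have : 0 < q ^ (i+1) := pow_pos hq0 _
    linarith

include hq0 hq1 in
lemma qFactorial_eq (n : ℕ) : qFactorial q n = P q n / (1 - q) ^ n := by
  induction n with
  | zero => simp [qFactorial, P]
  | succ n ih =>
    have hgeom : qNat q (n+1) = (1 - q ^ (n+1)) / (1 - q) := by
      rw [qNat, geom_sum_eq (by linarith : q ≠ 1)]
      rw [div_eq_div_iff (by linarith) (by linarith : (1:ℝ) - q ≠ 0)]
      ring
    rw [qFactorial, ih, hgeom, P_succ, div_mul_div_comm]
    ring

include hq0 hq1 in
lemma summable_base : Summable (fun m : ℕ => q ^ m / P q m) := by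
  apply summable_of_ratio_norm_eventually_le (r := (1 + q)/2) (by linarith)
  have hto : Filter.Tendsto (fun m : ℕ => q ^ (m + 1)) Filter.atTop (nhds 0) := by
    exact (tendsto_pow_atTop_nhds_zero_of_lt_one hq0.le hq1).comp
      (Filter.tendsto_add_atTop_nat 1)
  have hev : ∀ᶠ m in Filter.atTop, q ^ (m + 1) < (1 - q)/2 :=
    hto.eventually (eventually_lt_nhds (by linarith : (0:ℝ) < (1-q)/2))
  filter_upwards [hev] with m hm
  have hPpos := P_pos hq0 hq1 m
  have hqm : (0:ℝ) < q ^ m := pow_pos hq0 m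
  have hx1 : q ^ (m+1) < 1 := pow_lt_one₀ hq0.le hq1 (Nat.succ_ne_zero m)
  have hx0 : (0:ℝ) < q ^ (m+1) := pow_pos hq0 (m+1)
  show ‖q ^ (m+1) / P q (m+1)‖ ≤ (1 + q)/2 * ‖q ^ m / P q m‖
  rw [Real.norm_of_nonneg (div_nonneg hx0.le (P_pos hq0 hq1 (m+1)).le),
      Real.norm_of_nonneg (div_nonneg hqm.le hPpos.le), P_succ]
  have key : q / (1 - q ^ (m+1)) ≤ (1 + q)/2 := by
    rw [div_le_iff₀ (by linarith)]
    nlinarith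
  calc q ^ (m+1) / (P q m * (1 - q ^ (m+1)))
      = q / (1 - q ^ (m+1)) * (q ^ m / P q m) := by
        field_simp
        ring
    _ ≤ (1 + q)/2 * (q ^ m / P q m) :=
        mul_le_mul_of_nonneg_right key (div_nonneg hqm.le hPpos.le)

include hq0 hq1 in
lemma summable_u (n : ℕ) : Summable (fun m : ℕ => q ^ ((n + 1) * m) / P q m) := by
  refine Summable.of_nonneg_of_le (fun m => div_nonneg (pow_nonneg hq0.le _) (P_pos hq0 hq1 m).le) (fun m => ?_) (summable_base hq0 hq1)
  have : q ^ ((n+1)*m) ≤ q ^ m :=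
    pow_le_pow_of_le_one hq0.le hq1.le (Nat.le_mul_of_pos_left m n.succ_pos)
  gcongr
  exact (P_pos hq0 hq1 m).le

noncomputable def T (q : ℝ) (n : ℕ) : ℝ := ∑' m : ℕ, q ^ ((n + 1) * m) / P q m

include hq0 hq1 in
lemma hasSum_T (n : ℕ) : HasSum (fun m : ℕ => q ^ ((n + 1) * m) / P q m) (T q n) :=
  (summable_u hq0 hq1 n).hasSum

include hq0 hq1 in
lemma T_succ (n : ℕ) : T q (n + 1) = (1 - q ^ (n + 1)) * T q n := by
  set x := q ^ (n + 1) with hxdef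
  have hPne : ∀ m, P q m ≠ 0 := fun m => (P_pos hq0 hq1 m).ne'
  set a : ℕ → ℝ := fun m => x ^ m / P q m with hadef
  have ha : HasSum a (T q n) := by
    have := hasSum_T hq0 hq1 n
    convert this using 2 with m
    rw [hadef, hxdef]
    simp [← pow_mul]
  have ha0 : a 0 = 1 := by simp [hadef, P]
  have h1 : HasSum (fun m => a (m + 1)) (T q n - 1) := by
    rw [hasSum_nat_add_iff 1]
    simpa [ha0] using ha
  have h2 : HasSum (fun m => x * a m) (x * T q n) := ha.mul_left x
  have h3 := h1.sub h2
  set b : ℕ → ℝ := fun m => (q * x) ^ m / P q m with hbdef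
  have hfun : ∀ m, a (m + 1) - x * a m = b (m + 1) := by
    intro m
    have h1m : (1 : ℝ) - q ^ (m + 1) ≠ 0 := by
      have := P_pos hq0 hq1 (m+1)
      rw [P_succ] at this
      intro h
      rw [h, mul_zero] at this
      exact lt_irrefl 0 this
    have hPm := hPne m
    rw [hadef, hbdef]
    simp only []
    rw [P_succ, mul_pow]
    field_simp [hPm, h1m]
    ring
  have h4 : HasSum (fun m => b (m + 1)) (T q n - 1 - x * T q n) := by
    have heq : (fun m => a (m + 1) - x * a m) = (fun m => b (m + 1)) := funext hfun
    rwa [heq] at h3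
  have h5 : HasSum b ((1 - x) * T q n) := by
    have h6 := (hasSum_nat_add_iff (f := b) 1).mp h4
    have hb0 : b 0 = 1 := by simp [hbdef, P]
    convert h6 using 1
    · rfl
    simp [hb0]
    ring
  have hb : HasSum b (T q (n + 1)) := by
    have := hasSum_T hq0 hq1 (n + 1)
    have hqx : q * x = q ^ (n + 1 + 1) := by rw [hxdef, ← pow_succ']
    convert this using 2 with m
    rw [hbdef]
    simp only []
    rw [hqx, ← pow_mul]
  exact hb.unique h5

include hq0 hq1 in
lemma T_eq (n : ℕ) : T q n = P q n * T q 0 := by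
  induction n with
  | zero => simp [P]
  | succ n ih => rw [T_succ hq0 hq1, ih, P_succ]; ring

include hq0 hq1 in
lemma T_pos : 0 < T q 0 := by
  refine Summable.tsum_pos (summable_u hq0 hq1 0) (fun m => div_nonneg (pow_nonneg hq0.le _) (P_pos hq0 hq1 m).le) 0 ?_
  simp [P]

/-- the weights -/
noncomputable def w (q : ℝ) (m : ℕ) : ℝ := q ^ m / P q m / T q 0

include hq0 hq1 in
lemma w_pos (m : ℕ) : 0 < w q m :=
  div_pos (div_pos (pow_pos hq0 m) (P_pos hq0 hq1 m)) (T_pos hq0 hq1)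

include hq0 hq1 in
lemma hasSum_w : HasSum (w q) 1 := by
  have h := (hasSum_T hq0 hq1 0).div_const (T q 0)
  have : T q 0 / T q 0 = 1 := div_self (T_pos hq0 hq1).ne'
  rw [this] at h
  convert h using 2 with m
  · rfl
  simp [w]

include hq0 hq1 in
lemma hasSum_key (n : ℕ) : HasSum (fun m => w q m * (q ^ m / (1 - q)) ^ n) (qFactorial q n) := by
  have h := (hasSum_T hq0 hq1 n).div_const (T q 0 * (1 - q) ^ n)
  have hval : T q n / (T q 0 * (1 - q) ^ n) = qFactorial q n := by
    rw [T_eq hq0 hq1 n, qFactorial_eq hq0 hq1, mul_comm (P q n) (T q 0),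
      mul_div_mul_left _ _ (T_pos hq0 hq1).ne']
  rw [hval] at h
  convert h using 2 with m
  · rfl
  have hPm := (P_pos hq0 hq1 m).ne'
  have hT0 := (T_pos hq0 hq1).ne'
  have h1q : (1:ℝ) - q ≠ 0 := by intro hc; rw [sub_eq_zero] at hc; exact absurd hc.symm (ne_of_lt hq1)
  rw [w, div_pow, ← pow_mul]
  field_simp
  ring


end Stmt4Aux

/-- if `ψ̃ ∈ O^k(Ŝ_d, E)` then `φ(z) = Σ [n]_q! ψ̃⁽ⁿ⁾(0) zⁿ/n!` has positive
radius of convergence and extends to a function in `O^k(Ŝ'_d, E)` on some disc-sector in the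
same direction `d`. -/
theorem stmt4 (q k d α r : ℝ) (hq0 : 0 < q) (hq1 : q < 1) (hk : 0 < k)
    (hα0 : 0 < α) (hα : α < 2 * π) (hr : 0 < r)
    (E : Type) [NormedAddCommGroup E] [NormedSpace ℂ E] [CompleteSpace E]
    (ψ : ℂ → E)
    (hψ : DifferentiableOn ℂ ψ (DiscSector d α r))
    (hgrowth : ExpGrowthOn k d α r ψ) :
    ExtendsToSector k d
      (fun n => ((qFactorial q n / (n.factorial : ℝ) : ℝ) : ℂ) • iteratedDeriv n ψ 0) := by
  classical
  have h1q : (0:ℝ) < 1 - q := by linarith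
  set w : ℕ → ℝ := Stmt4Aux.w q with hwdef
  set μ : ℕ → ℝ := fun m => q ^ m / (1 - q) with hμdef
  have hμpos : ∀ m, 0 < μ m := fun m => div_pos (pow_pos hq0 m) h1q
  have hμle : ∀ m, μ m ≤ (1 - q)⁻¹ := by
    intro m
    rw [hμdef]
    simp only []
    rw [div_eq_mul_inv]
    have : q ^ m ≤ 1 := pow_le_one₀ hq0.le hq1.le
    nlinarith [inv_pos.mpr h1q]
  have hwpos : ∀ m, 0 < w m := fun m => Stmt4Aux.w_pos hq0 hq1 m
  have hw1 : HasSum w 1 := Stmt4Aux.hasSum_w hq0 hq1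
  have hwsummable : Summable w := hw1.summable
  set f : ℂ → E := fun z => ∑' m : ℕ, ((w m : ℝ) : ℂ) • ψ ((μ m : ℂ) * z) with hfdef
  set U : Set ℂ := DiscSector d (α/2) ((1-q)*r/2) with hUdef
  have hmem : ∀ z ∈ U, ∀ m : ℕ, (μ m : ℂ) * z ∈ DiscSector d (α/2) (3*r/4) := by
    rintro z (hz | hz) m
    · exact Or.inl (Stmt4Aux.sector_smul (hμpos m) hz)
    · right
      rw [mem_ball_zero_iff] at hz ⊢
      rw [norm_mul, Complex.norm_real, Real.norm_of_nonneg (hμpos m).le]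
      calc μ m * ‖z‖ ≤ (1-q)⁻¹ * ‖z‖ := by
            exact mul_le_mul_of_nonneg_right (hμle m) (norm_nonneg z)
        _ < (1-q)⁻¹ * ((1-q)*r/2) := by
            exact mul_lt_mul_of_pos_left hz (inv_pos.mpr h1q)
        _ ≤ 3*r/4 := by
            rw [mul_div_assoc, inv_mul_cancel_left₀ h1q.ne']
            linarith
  have hincl : DiscSector d (α/2) (3*r/4) ⊆ DiscSector d α r :=
    Stmt4Aux.discSector_mono (by linarith) (by linarith)
  obtain ⟨A, B, hA, hB, hbound⟩ := hgrowth (α/2) ⟨half_pos hα0, half_lt_self hα0⟩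
    (3*r/4) ⟨by positivity, by linarith⟩
  have hterm : ∀ z ∈ U, ∀ m : ℕ, ‖((w m : ℝ) : ℂ) • ψ ((μ m : ℂ) * z)‖ ≤
      w m * (A * Real.exp (B * ((1-q)⁻¹ * ‖z‖) ^ k)) := by
    intro z hz m
    rw [norm_smul, Complex.norm_real, Real.norm_of_nonneg (hwpos m).le]
    have h2 := hbound _ (hmem z hz m)
    have h3 : ‖(μ m : ℂ) * z‖ = μ m * ‖z‖ := by
      rw [norm_mul, Complex.norm_real, Real.norm_eq_abs, abs_of_pos (hμpos m)]
    have h4 : B * ‖(μ m : ℂ) * z‖ ^ k ≤ B * ((1-q)⁻¹ * ‖z‖) ^ k := by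
      refine mul_le_mul_of_nonneg_left ?_ hB.le
      rw [h3]
      exact Real.rpow_le_rpow (by positivity)
        (mul_le_mul_of_nonneg_right (hμle m) (norm_nonneg z)) hk.le
    refine mul_le_mul_of_nonneg_left ?_ (hwpos m).le
    calc ‖ψ ((μ m : ℂ) * z)‖ ≤ A * Real.exp (B * ‖(μ m : ℂ) * z‖ ^ k) := h2
      _ ≤ A * Real.exp (B * ((1-q)⁻¹ * ‖z‖) ^ k) :=
          mul_le_mul_of_nonneg_left (Real.exp_le_exp.mpr h4) hA.le
  have hDopen : IsOpen (DiscSector d α r) := (Stmt4Aux.isOpen_sector d α).union Metric.isOpen_ball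
  have hUopen : IsOpen U := (Stmt4Aux.isOpen_sector d (α/2)).union Metric.isOpen_ball
  refine ⟨α/2, (1-q)*r/2, half_pos hα0, by linarith, by positivity, f, ?_, ?_, ?_⟩
  · -- DifferentiableOn
    intro z₀ hz₀
    set W : Set ℂ := U ∩ Metric.ball z₀ 1 with hWdef
    have hWopen : IsOpen W := hUopen.inter Metric.isOpen_ball
    have hz₀W : z₀ ∈ W := ⟨hz₀, Metric.mem_ball_self one_pos⟩
    have hdiffterm : ∀ m : ℕ, DifferentiableOn ℂ (fun z => ((w m : ℝ) : ℂ) • ψ ((μ m : ℂ) * z)) W := by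
      intro m
      intro z hz
      have hψat : DifferentiableAt ℂ ψ ((μ m : ℂ) * z) :=
        hψ.differentiableAt (hDopen.mem_nhds (hincl (hmem z hz.1 m)))
      exact ((hψat.comp z ((differentiableAt_id.const_mul _))).const_smul _).differentiableWithinAt
    have hbW : ∀ (m : ℕ), ∀ z ∈ W, ‖((w m : ℝ) : ℂ) • ψ ((μ m : ℂ) * z)‖ ≤
        w m * (A * Real.exp (B * ((1-q)⁻¹ * (‖z₀‖ + 1)) ^ k)) := by
      intro m z hz
      refine le_trans (hterm z hz.1 m) (mul_le_mul_of_nonneg_left (mul_le_mul_of_nonneg_left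
        (Real.exp_le_exp.mpr (mul_le_mul_of_nonneg_left (Real.rpow_le_rpow (by positivity)
          (mul_le_mul_of_nonneg_left ?_ (by positivity)) hk.le) hB.le)) hA.le) (hwpos m).le)
      have := hz.2
      rw [Metric.mem_ball] at this
      calc ‖z‖ = ‖z₀ + (z - z₀)‖ := by ring_nf
        _ ≤ ‖z₀‖ + ‖z - z₀‖ := norm_add_le _ _
        _ ≤ ‖z₀‖ + 1 := by
            have : ‖z - z₀‖ < 1 := by
              rw [← Complex.dist_eq]
              exact hz.2
            linarith
    have hu : Summable (fun m => w m * (A * Real.exp (B * ((1-q)⁻¹ * (‖z₀‖ + 1)) ^ k))) :=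
      hwsummable.mul_right _
    have hdiff := Complex.differentiableOn_tsum_of_summable_norm hu hdiffterm hWopen hbW
    exact ((hdiff z₀ hz₀W).differentiableAt (hWopen.mem_nhds hz₀W)).differentiableWithinAt
  · -- ExpGrowthOn
    intro α' hα' r' hr'
    refine ⟨A, B * ((1-q)⁻¹) ^ k, hA, by positivity, ?_⟩
    intro x hx
    have hxU : x ∈ U := Stmt4Aux.discSector_mono hα'.2.le hr'.2.le hx
    have hsn : Summable (fun m => ‖((w m : ℝ) : ℂ) • ψ ((μ m : ℂ) * x)‖) :=
      Summable.of_nonneg_of_le (fun m => norm_nonneg _) (fun m => hterm x hxU m)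
        (hwsummable.mul_right _)
    calc ‖f x‖ ≤ ∑' m, ‖((w m : ℝ) : ℂ) • ψ ((μ m : ℂ) * x)‖ := norm_tsum_le_tsum_norm hsn
      _ ≤ ∑' m, w m * (A * Real.exp (B * ((1-q)⁻¹ * ‖x‖) ^ k)) :=
          Summable.tsum_le_tsum (fun m => hterm x hxU m) hsn (hwsummable.mul_right _)
      _ = (∑' m, w m) * (A * Real.exp (B * ((1-q)⁻¹ * ‖x‖) ^ k)) := tsum_mul_right
      _ = A * Real.exp (B * ((1-q)⁻¹) ^ k * ‖x‖ ^ k) := by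
          rw [hw1.tsum_eq, one_mul, Real.mul_rpow (by positivity) (norm_nonneg x), mul_assoc]
  · -- HasSum
    refine ⟨(1-q)*r/8, by positivity, by nlinarith, ?_⟩
    intro t ht
    rw [mem_ball_zero_iff] at ht
    have hballψ : DifferentiableOn ℂ ψ (Metric.ball (0:ℂ) r) :=
      hψ.mono Set.subset_union_right
    have htay : ∀ s : ℂ, ‖s‖ < r →
        HasSum (fun n : ℕ => (n.factorial : ℂ)⁻¹ • s ^ n • iteratedDeriv n ψ 0) (ψ s) := by
      intro s hs
      have := Complex.hasSum_taylorSeries_on_ball hballψ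
        (mem_ball_zero_iff.mpr (by exact hs))
      simpa using this
    -- Cauchy-type coefficient bound
    have hr2 : ‖((r/2 : ℝ) : ℂ)‖ < r := by
      rw [Complex.norm_real, Real.norm_eq_abs, abs_of_pos (by linarith)]
      linarith
    have h2 := (htay ((r/2 : ℝ) : ℂ) hr2).summable
    have h3 : Filter.Tendsto
        (fun n => ‖(n.factorial : ℂ)⁻¹ • ((r/2 : ℝ) : ℂ) ^ n • iteratedDeriv n ψ 0‖)
        Filter.atTop (nhds 0) := by
      simpa using h2.tendsto_atTop_zero.norm
    obtain ⟨C₀, hC₀⟩ := h3.bddAbove_range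
    set C : ℝ := max C₀ 1 with hCdef
    have hCpos : 0 < C := lt_of_lt_of_le one_pos (le_max_right _ _)
    have hnorm_eq : ∀ n : ℕ, ‖(n.factorial : ℂ)⁻¹ • ((r/2 : ℝ) : ℂ) ^ n • iteratedDeriv n ψ 0‖
        = (n.factorial : ℝ)⁻¹ * ((r/2) ^ n * ‖iteratedDeriv n ψ 0‖) := by
      intro n
      rw [norm_smul, norm_smul, norm_inv, norm_pow, Complex.norm_natCast, Complex.norm_real,
        Real.norm_of_nonneg (by positivity : (0:ℝ) ≤ r/2)]
    have hG : ∀ n : ℕ, ‖iteratedDeriv n ψ 0‖ * (n.factorial : ℝ)⁻¹ ≤ C * (2/r) ^ n := by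
      intro n
      have hmem' := hC₀ (Set.mem_range_self (f := fun n =>
        ‖(n.factorial : ℂ)⁻¹ • ((r/2 : ℝ) : ℂ) ^ n • iteratedDeriv n ψ 0‖) n)
      rw [hnorm_eq n] at hmem'
      have hrn : (0:ℝ) < (r/2) ^ n := by positivity
      have h5 : ‖iteratedDeriv n ψ 0‖ * (n.factorial : ℝ)⁻¹ * (r/2)^n ≤ C := by
        calc ‖iteratedDeriv n ψ 0‖ * (n.factorial : ℝ)⁻¹ * (r/2)^n
            = (n.factorial : ℝ)⁻¹ * ((r/2) ^ n * ‖iteratedDeriv n ψ 0‖) := by ring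
          _ ≤ C₀ := hmem'
          _ ≤ C := le_max_left _ _
      have h6 : (2/r : ℝ)^n = ((r/2)^n)⁻¹ := by
        rw [← inv_pow]
        congr 1
        rw [inv_div]
      have h7 : ‖iteratedDeriv n ψ 0‖ * (n.factorial : ℝ)⁻¹ ≤ C / (r/2)^n :=
        (le_div_iff₀ hrn).mpr h5
      rw [h6, ← div_eq_mul_inv]
      exact h7
    -- geometric bound base
    have hbase : (1-q)⁻¹ * ‖t‖ * (2/r) ≤ 1/4 := by
      have h7 : ‖t‖ ≤ (1-q)*r/8 := ht.le
      have h8 : (1-q)⁻¹ * ‖t‖ ≤ r/8 := by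
        calc (1-q)⁻¹ * ‖t‖ ≤ (1-q)⁻¹ * ((1-q)*r/8) :=
              mul_le_mul_of_nonneg_left h7 (by positivity)
          _ = r/8 := by field_simp
      calc (1-q)⁻¹ * ‖t‖ * (2/r) ≤ (r/8) * (2/r) := by
            refine mul_le_mul_of_nonneg_right h8 (by positivity)
        _ = 1/4 := by field_simp; ring
    have habsμt : ∀ m : ℕ, ‖(μ m : ℂ) * t‖ = μ m * ‖t‖ := by
      intro m
      rw [norm_mul, Complex.norm_real, Real.norm_eq_abs, abs_of_pos (hμpos m)]
    have habsμt_lt : ∀ m : ℕ, ‖(μ m : ℂ) * t‖ < r := by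
      intro m
      rw [habsμt m]
      calc μ m * ‖t‖ ≤ (1-q)⁻¹ * ‖t‖ :=
            mul_le_mul_of_nonneg_right (hμle m) (norm_nonneg t)
        _ ≤ r/8 := by
            calc (1-q)⁻¹ * ‖t‖ ≤ (1-q)⁻¹ * ((1-q)*r/8) :=
                  mul_le_mul_of_nonneg_left ht.le (by positivity)
              _ = r/8 := by field_simp
        _ < r := by linarith
    set F : ℕ × ℕ → E := fun p =>
      ((w p.1 : ℝ) : ℂ) • ((p.2.factorial : ℂ)⁻¹ • ((μ p.1 : ℂ) * t) ^ p.2 • iteratedDeriv p.2 ψ 0)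
      with hFdef
    have hFnorm : ∀ p : ℕ × ℕ, ‖F p‖ =
        w p.1 * ((p.2.factorial : ℝ)⁻¹ * ((μ p.1 * ‖t‖) ^ p.2 * ‖iteratedDeriv p.2 ψ 0‖)) := by
      intro p
      rw [hFdef]
      simp only []
      rw [norm_smul, norm_smul, norm_smul, Complex.norm_real,
        Real.norm_of_nonneg (hwpos p.1).le, norm_inv, Complex.norm_natCast, norm_pow,
        habsμt p.1]
    have hFle : ∀ p : ℕ × ℕ, ‖F p‖ ≤ w p.1 * (C * (1/4 : ℝ) ^ p.2) := by
      intro p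
      rw [hFnorm p]
      refine mul_le_mul_of_nonneg_left ?_ (hwpos p.1).le
      calc (p.2.factorial : ℝ)⁻¹ * ((μ p.1 * ‖t‖) ^ p.2 * ‖iteratedDeriv p.2 ψ 0‖)
          = (μ p.1 * ‖t‖) ^ p.2 * (‖iteratedDeriv p.2 ψ 0‖ * (p.2.factorial : ℝ)⁻¹) := by
            ring
        _ ≤ ((1-q)⁻¹ * ‖t‖) ^ p.2 * (C * (2/r) ^ p.2) := by
            refine mul_le_mul (pow_le_pow_left₀ (by positivity)
              (mul_le_mul_of_nonneg_right (hμle p.1) (norm_nonneg t)) p.2) (hG p.2)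
              (by positivity) (by positivity)
        _ = C * ((1-q)⁻¹ * ‖t‖ * (2/r)) ^ p.2 := by
            rw [mul_pow]
            ring
        _ ≤ C * (1/4 : ℝ) ^ p.2 := by
            refine mul_le_mul_of_nonneg_left (pow_le_pow_left₀ (by positivity) hbase p.2) hCpos.le
    have hsum2 : Summable (fun p : ℕ × ℕ => w p.1 * (C * (1/4 : ℝ) ^ p.2)) := by
      have hg : Summable (fun n : ℕ => C * (1/4 : ℝ) ^ n) :=
        (summable_geometric_of_lt_one (by norm_num) (by norm_num)).mul_left C
      have := summable_mul_of_summable_norm (f := w) (g := fun n : ℕ => C * (1/4 : ℝ) ^ n)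
        ?_ ?_
      · exact this
      · simpa [Real.norm_of_nonneg, abs_of_pos, fun m => (hwpos m).le] using hwsummable.abs
      · exact hg.abs
    have hFsummable : Summable F :=
      Summable.of_norm (Summable.of_nonneg_of_le (fun p => norm_nonneg _) hFle hsum2)
    have hinner_m : ∀ m : ℕ, HasSum (fun n => F (m, n)) (((w m : ℝ) : ℂ) • ψ ((μ m : ℂ) * t)) := by
      intro m
      exact (htay ((μ m : ℂ) * t) (habsμt_lt m)).const_smul _
    have hinner_n : ∀ n : ℕ, HasSum (fun m => F (m, n))
        (t ^ n • (((qFactorial q n / (n.factorial : ℝ) : ℝ) : ℂ) • iteratedDeriv n ψ 0)) := by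
      intro n
      have hkey := Stmt4Aux.hasSum_key hq0 hq1 n
      have h1 : HasSum (fun m => ((w m * (μ m) ^ n : ℝ) : ℂ)) (((qFactorial q n : ℝ) : ℂ)) := by
        rw [Complex.hasSum_ofReal]
        exact hkey
      have h2 := h1.smul_const ((n.factorial : ℂ)⁻¹ • t ^ n • iteratedDeriv n ψ 0)
      have hnf : ((n.factorial : ℕ) : ℂ) ≠ 0 := Nat.cast_ne_zero.mpr n.factorial_ne_zero
      have h3 : (fun m => ((w m * μ m ^ n : ℝ) : ℂ) • ((n.factorial : ℂ)⁻¹ • t ^ n • iteratedDeriv n ψ 0))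
          = (fun m => F (m, n)) := by
        funext m
        rw [hFdef]
        simp only []
        rw [mul_pow, smul_smul, smul_smul, smul_smul, smul_smul]
        congr 1
        push_cast
        ring
      have h4 : ((qFactorial q n : ℝ) : ℂ) • ((n.factorial : ℂ)⁻¹ • t ^ n • iteratedDeriv n ψ 0)
          = t ^ n • (((qFactorial q n / (n.factorial : ℝ) : ℝ) : ℂ) • iteratedDeriv n ψ 0) := by
        simp only [smul_smul]
        congr 1
        push_cast
        field_simp
      rw [h3, h4] at h2
      exact h2
    have hqFpos : ∀ n : ℕ, 0 < qFactorial q n := by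
      intro n
      rw [Stmt4Aux.qFactorial_eq hq0 hq1]
      exact div_pos (Stmt4Aux.P_pos hq0 hq1 n) (by positivity)
    have hqFle : ∀ n : ℕ, qFactorial q n ≤ ((1-q)⁻¹) ^ n := by
      intro n
      rw [Stmt4Aux.qFactorial_eq hq0 hq1, div_eq_mul_inv, ← inv_pow]
      have hl : (0:ℝ) ≤ ((1-q)⁻¹) ^ n := pow_nonneg (inv_pos.mpr h1q).le n
      calc Stmt4Aux.P q n * ((1 - q)⁻¹) ^ n ≤ 1 * ((1 - q)⁻¹) ^ n :=
            mul_le_mul_of_nonneg_right (Stmt4Aux.P_le_one hq0 hq1 n) hl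
        _ = ((1 - q)⁻¹) ^ n := one_mul _
    have hout : Summable (fun n : ℕ =>
        t ^ n • (((qFactorial q n / (n.factorial : ℝ) : ℝ) : ℂ) • iteratedDeriv n ψ 0)) := by
      have hgeo : Summable (fun n : ℕ => C * (1/4 : ℝ) ^ n) :=
        (summable_geometric_of_lt_one (by norm_num) (by norm_num)).mul_left C
      refine Summable.of_norm (Summable.of_nonneg_of_le (fun n => norm_nonneg _) ?_ hgeo)
      intro n
      have hl : (0:ℝ) ≤ (1-q)⁻¹ := (inv_pos.mpr h1q).le
      rw [norm_smul, norm_smul, norm_pow, Complex.norm_real,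
        Real.norm_of_nonneg (le_of_lt (div_pos (hqFpos n) (by exact_mod_cast n.factorial_pos)))]
      have h1' : qFactorial q n / (n.factorial : ℝ) * ‖iteratedDeriv n ψ 0‖
          ≤ ((1-q)⁻¹)^n * (C * (2/r)^n) := by
        calc qFactorial q n / (n.factorial : ℝ) * ‖iteratedDeriv n ψ 0‖
            = qFactorial q n * (‖iteratedDeriv n ψ 0‖ * ((n.factorial : ℝ))⁻¹) := by
              rw [div_eq_mul_inv]
              ring
          _ ≤ ((1-q)⁻¹)^n * (C * (2/r)^n) :=
              mul_le_mul (hqFle n) (hG n) (by positivity) (pow_nonneg hl n)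
      have e1 : ‖t‖ ^ n * (qFactorial q n / (n.factorial : ℝ) * ‖iteratedDeriv n ψ 0‖)
          ≤ (‖t‖ ^ n * ((1-q)⁻¹)^n) * (C * (2/r)^n) := by
        calc ‖t‖ ^ n * (qFactorial q n / (n.factorial : ℝ) * ‖iteratedDeriv n ψ 0‖)
            ≤ ‖t‖ ^ n * (((1-q)⁻¹)^n * (C * (2/r)^n)) :=
              mul_le_mul_of_nonneg_left h1' (by positivity)
          _ = (‖t‖ ^ n * ((1-q)⁻¹)^n) * (C * (2/r)^n) := by ring
      refine le_trans e1 ?_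
      have e2 : (‖t‖ ^ n * ((1-q)⁻¹)^n) * (C * (2/r)^n) = C * ((1-q)⁻¹ * ‖t‖ * (2/r))^n := by
        rw [mul_pow, mul_pow]
        ring
      rw [e2]
      refine mul_le_mul_of_nonneg_left (pow_le_pow_left₀ ?_ ?_ n) hCpos.le
      · positivity
      · exact hbase
    have heq : ∑' n : ℕ,
        t ^ n • (((qFactorial q n / (n.factorial : ℝ) : ℝ) : ℂ) • iteratedDeriv n ψ 0) = f t := by
      have e1 : ∀ n : ℕ, t ^ n • (((qFactorial q n / (n.factorial : ℝ) : ℝ) : ℂ) • iteratedDeriv n ψ 0)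
          = ∑' m : ℕ, F (m, n) := fun n => ((hinner_n n).tsum_eq).symm
      have e2 : ∀ m : ℕ, (∑' n : ℕ, F (m, n)) = ((w m : ℝ) : ℂ) • ψ ((μ m : ℂ) * t) :=
        fun m => (hinner_m m).tsum_eq
      calc ∑' n : ℕ, t ^ n • (((qFactorial q n / (n.factorial : ℝ) : ℝ) : ℂ) • iteratedDeriv n ψ 0)
          = ∑' (n : ℕ) (m : ℕ), F (m, n) := by
            exact tsum_congr e1
        _ = ∑' (m : ℕ) (n : ℕ), F (m, n) := by
            exact Summable.tsum_comm' hFsummable hFsummable.prod_factor hFsummable.prod_symm.prod_factor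
        _ = ∑' m : ℕ, ((w m : ℝ) : ℂ) • ψ ((μ m : ℂ) * t) := tsum_congr e2
        _ = f t := rfl
    rw [← heq]
    exact hout.hasSum
end

section
/- Let q ∈ (0,1), R > 0, E a complex Banach space, and let ψ be an E-valued function holomorphic on the disc D_R = {z ∈ ℂ : |z| < R}. Then for every z ∈ ℂ with |z| < (1−q)R both of the following series converge and Σ_{n≥0} [n]_q!·ψ^{(n)}(0)·zⁿ/n! = (q;q)_∞·Σ_{n≥0} qⁿ·ψ(zqⁿ/(1−q))/(q;q)_n. -/
open scoped Real

noncomputable section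

/-- The `q`-Pochhammer symbol `(a;q)_n = ∏_{j<n} (1 - a qʲ)`. -/
def qPoch (a q : ℝ) (n : ℕ) : ℝ := ∏ j ∈ Finset.range n, (1 - a * q ^ j)

/-- The infinite `q`-Pochhammer symbol `(a;q)_∞ = ∏_{j≥0} (1 - a qʲ)`. -/
def qPochInf (a q : ℝ) : ℝ := ∏' j : ℕ, (1 - a * q ^ j)

namespace Stmt6Aux

variable {q : ℝ}

lemma exp_le_one_sub {t : ℝ} (ht0 : 0 ≤ t) (ht1 : t < 1) :
    Real.exp (-(t / (1 - t))) ≤ 1 - t := by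
  have h1 : (0:ℝ) < 1 - t := by linarith
  have h2 : 1 / (1 - t) ≤ Real.exp (t / (1 - t)) := by
    have h3 := Real.add_one_le_exp (t / (1 - t))
    have h4 : 1 / (1 - t) = t / (1 - t) + 1 := by field_simp; ring
    linarith
  rw [Real.exp_neg]
  calc (Real.exp (t / (1 - t)))⁻¹ ≤ (1 / (1 - t))⁻¹ := by
        exact inv_anti₀ (by positivity) h2
    _ = 1 - t := by field_simp

lemma neg_log_le {t : ℝ} (ht0 : 0 ≤ t) (ht1 : t < 1) :
    -Real.log (1 - t) ≤ t / (1 - t) := by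
  have h1 : (0:ℝ) < 1 - t := by linarith
  have := Real.log_le_log (Real.exp_pos _) (exp_le_one_sub ht0 ht1)
  rw [Real.log_exp] at this
  linarith

lemma one_sub_pos (hq0 : 0 < q) (hq1 : q < 1) {a : ℝ} (ha0 : 0 ≤ a) (ha1 : a < 1) (j : ℕ) :
    0 < 1 - a * q ^ j := by
  have h1 : q ^ j ≤ 1 := pow_le_one₀ hq0.le hq1.le
  have h2 : a * q ^ j ≤ a * 1 := by
    apply mul_le_mul_of_nonneg_left h1 ha0
  nlinarith

lemma qPoch_pos (hq0 : 0 < q) (hq1 : q < 1) {a : ℝ} (ha0 : 0 ≤ a) (ha1 : a < 1) (n : ℕ) :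
    0 < qPoch a q n :=
  Finset.prod_pos fun j _ => one_sub_pos hq0 hq1 ha0 ha1 j

lemma qPoch_le_one (hq0 : 0 < q) (hq1 : q < 1) {a : ℝ} (ha0 : 0 ≤ a) (ha1 : a < 1) (n : ℕ) :
    qPoch a q n ≤ 1 := by
  apply Finset.prod_le_one (fun j _ => (one_sub_pos hq0 hq1 ha0 ha1 j).le)
  intro j _
  have : 0 ≤ a * q ^ j := by positivity
  linarith

/-- The uniform positive lower bound for `(q;q)_n`. -/
def Cq (q : ℝ) : ℝ := Real.exp (-(q / ((1 - q) * (1 - q))))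

lemma Cq_pos : 0 < Cq q := Real.exp_pos _

lemma Cq_le_qPoch (hq0 : 0 < q) (hq1 : q < 1) (n : ℕ) : Cq q ≤ qPoch q q n := by
  have h1q : (0:ℝ) < 1 - q := by linarith
  have key : ∀ j : ℕ, Real.exp (-(q ^ (j+1) / (1 - q))) ≤ 1 - q * q ^ j := by
    intro j
    have ht0 : 0 ≤ q ^ (j+1) := by positivity
    have ht1 : q ^ (j+1) ≤ q := by
      calc q ^ (j+1) ≤ q ^ 1 := pow_le_pow_of_le_one hq0.le hq1.le (by omega)
        _ = q := pow_one q
    have h2 : q ^ (j+1) / (1 - q ^ (j+1)) ≤ q ^ (j+1) / (1 - q) := by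
      apply div_le_div_of_nonneg_left ht0 h1q
      linarith
    calc Real.exp (-(q ^ (j+1) / (1 - q)))
        ≤ Real.exp (-(q ^ (j+1) / (1 - q ^ (j+1)))) := by
          apply Real.exp_le_exp.mpr; linarith
      _ ≤ 1 - q ^ (j+1) := exp_le_one_sub ht0 (by linarith)
      _ = 1 - q * q ^ j := by ring_nf
  have hprod : ∏ j ∈ Finset.range n, Real.exp (-(q ^ (j+1) / (1 - q))) ≤ qPoch q q n := by
    apply Finset.prod_le_prod (fun j _ => (Real.exp_pos _).le) (fun j _ => key j)
  refine le_trans ?_ hprod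
  rw [← Real.exp_sum]
  apply Real.exp_le_exp.mpr
  have heq : ∑ x ∈ Finset.range n, -(q ^ (x + 1) / (1 - q))
      = -((∑ x ∈ Finset.range n, q ^ (x+1)) / (1 - q)) := by
    rw [Finset.sum_neg_distrib, ← Finset.sum_div]

  have hsum : ∑ j ∈ Finset.range n, q ^ (j+1) ≤ q / (1 - q) := by
    have h5 : ∑ j ∈ Finset.range n, q ^ j ≤ 1 / (1 - q) := by
      rw [geom_sum_eq (ne_of_lt hq1)]
      have hqn : 0 ≤ q ^ n := by positivity
      have heq2 : (q ^ n - 1)/(q - 1) = (1 - q ^ n)/(1 - q) := by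
        rw [div_eq_div_iff (by linarith) (by linarith)]; ring
      rw [heq2, div_le_div_iff₀ h1q h1q]
      nlinarith
    calc ∑ j ∈ Finset.range n, q ^ (j+1) = q * ∑ j ∈ Finset.range n, q ^ j := by
          rw [Finset.mul_sum]; congr 1; ext j; ring
      _ ≤ q * (1 / (1 - q)) := by apply mul_le_mul_of_nonneg_left h5 hq0.le
      _ = q / (1 - q) := by ring
  rw [heq, neg_le_neg_iff]
  calc (∑ j ∈ Finset.range n, q ^ (j+1)) / (1 - q) ≤ (q / (1-q)) / (1 - q) :=
        (div_le_div_iff_of_pos_right h1q).mpr hsum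
    _ = q / ((1-q)*(1-q)) := by rw [div_div]

end Stmt6Aux

section part2
namespace Stmt6Aux

variable {q : ℝ}

lemma summable_log (hq0 : 0 < q) (hq1 : q < 1) {a : ℝ} (ha0 : 0 ≤ a) (ha1 : a < 1) :
    Summable (fun j : ℕ => Real.log (1 - a * q ^ j)) := by
  have h1a : (0:ℝ) < 1 - a := by linarith
  apply Summable.of_norm_bounded (g := fun j => (a / (1 - a)) * q ^ j)
    ((summable_geometric_of_lt_one hq0.le hq1).mul_left _)
  intro j
  have hsp := one_sub_pos hq0 hq1 ha0 ha1 j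
  have ht0 : 0 ≤ a * q ^ j := by positivity
  have hqj : q ^ j ≤ 1 := pow_le_one₀ hq0.le hq1.le
  have hta : a * q ^ j ≤ a := by nlinarith
  have hlog : -Real.log (1 - a * q ^ j) ≤ (a * q ^ j) / (1 - a * q ^ j) :=
    neg_log_le ht0 (by linarith)
  have hlog2 : (a * q ^ j) / (1 - a * q ^ j) ≤ (a * q ^ j) / (1 - a) := by
    apply div_le_div_of_nonneg_left ht0 h1a
    linarith
  have hlogneg : Real.log (1 - a * q ^ j) ≤ 0 :=
    Real.log_nonpos (by linarith) (by linarith)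
  rw [Real.norm_eq_abs, abs_of_nonpos hlogneg]
  calc -Real.log (1 - a * q ^ j) ≤ (a * q ^ j) / (1 - a) := le_trans hlog hlog2
    _ = (a / (1 - a)) * q ^ j := by ring

lemma hasProd_qPochInf (hq0 : 0 < q) (hq1 : q < 1) {a : ℝ} (ha0 : 0 ≤ a) (ha1 : a < 1) :
    HasProd (fun j : ℕ => 1 - a * q ^ j) (qPochInf a q) ∧ 0 < qPochInf a q := by
  have hs := (summable_log hq0 hq1 ha0 ha1).hasSum
  have hp := hs.rexp
  have hfun : (Real.exp ∘ fun j : ℕ => Real.log (1 - a * q ^ j))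
      = fun j : ℕ => 1 - a * q ^ j :=
    funext fun j => Real.exp_log (one_sub_pos hq0 hq1 ha0 ha1 j)
  rw [hfun] at hp
  have htp := hp.tprod_eq
  constructor
  · rw [qPochInf, htp]; exact hp
  · rw [qPochInf, htp]; exact Real.exp_pos _

lemma qPochInf_pos (hq0 : 0 < q) (hq1 : q < 1) {a : ℝ} (ha0 : 0 ≤ a) (ha1 : a < 1) :
    0 < qPochInf a q := (hasProd_qPochInf hq0 hq1 ha0 ha1).2

lemma qPochInf_split (hq0 : 0 < q) (hq1 : q < 1) (k : ℕ) :
    qPoch q q k * qPochInf (q ^ (k+1)) q = qPochInf q q := by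
  have hk1 : q ^ (k+1) < 1 := pow_lt_one₀ hq0.le hq1 (by omega)
  have hm2 : HasProd (fun i : ℕ => 1 - q * q ^ (i + k)) (qPochInf (q ^ (k+1)) q) := by
    have h := (hasProd_qPochInf hq0 hq1 (a := q ^ (k+1)) (by positivity) hk1).1
    have hfun : (fun i : ℕ => 1 - q ^ (k+1) * q ^ i) = fun i : ℕ => 1 - q * q ^ (i + k) := by
      funext i
      rw [pow_add, pow_succ]
      ring
    rwa [hfun] at h
  have key := Multipliable.prod_mul_tprod_nat_mul' (f := fun j : ℕ => 1 - q * q ^ j) (k := k)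
    hm2.multipliable
  rw [← hm2.tprod_eq, qPoch, qPochInf]
  simpa using key

end Stmt6Aux
end part2

section part3
namespace Stmt6Aux

variable {q : ℝ}

/-- Euler's `q`-exponential series `Σ xⁿ/(q;q)_n`. -/
def G (q x : ℝ) : ℝ := ∑' n : ℕ, x ^ n / qPoch q q n

lemma summable_G (hq0 : 0 < q) (hq1 : q < 1) {x : ℝ} (hx0 : 0 ≤ x) (hx1 : x < 1) :
    Summable (fun n : ℕ => x ^ n / qPoch q q n) := by
  apply Summable.of_norm_bounded (g := fun n => (Cq q)⁻¹ * x ^ n)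
    ((summable_geometric_of_lt_one hx0 hx1).mul_left _)
  intro n
  have hp := qPoch_pos hq0 hq1 hq0.le hq1 n
  have hc := Cq_pos (q := q)
  have hcp := Cq_le_qPoch hq0 hq1 n
  rw [Real.norm_eq_abs, abs_of_nonneg (by positivity)]
  calc x ^ n / qPoch q q n ≤ x ^ n / Cq q :=
        div_le_div_of_nonneg_left (by positivity) hc hcp
    _ = (Cq q)⁻¹ * x ^ n := by rw [div_eq_mul_inv]; ring

lemma hasSum_G (hq0 : 0 < q) (hq1 : q < 1) {x : ℝ} (hx0 : 0 ≤ x) (hx1 : x < 1) :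
    HasSum (fun n : ℕ => x ^ n / qPoch q q n) (G q x) :=
  (summable_G hq0 hq1 hx0 hx1).hasSum

lemma qPoch_succ (a : ℝ) (n : ℕ) : qPoch a q (n + 1) = qPoch a q n * (1 - a * q ^ n) :=
  Finset.prod_range_succ _ _

lemma funEq (hq0 : 0 < q) (hq1 : q < 1) {x : ℝ} (hx0 : 0 ≤ x) (hx1 : x < 1) :
    G q (q * x) = (1 - x) * G q x := by
  have hqx0 : 0 ≤ q * x := by positivity
  have hqx1 : q * x < 1 := by nlinarith
  have h1 := hasSum_G hq0 hq1 hx0 hx1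
  have h2 := hasSum_G hq0 hq1 hqx0 hqx1
  have h3 := h1.sub h2
  have h4 := (hasSum_nat_add_iff' (f := fun n : ℕ =>
      x ^ n / qPoch q q n - (q * x) ^ n / qPoch q q n) 1).mpr h3
  have h5 : ∀ n : ℕ, x ^ (n+1) / qPoch q q (n+1) - (q * x) ^ (n+1) / qPoch q q (n+1)
      = x * (x ^ n / qPoch q q n) := by
    intro n
    have hp := qPoch_pos hq0 hq1 hq0.le hq1 n
    have hf : (0:ℝ) < 1 - q * q ^ n := one_sub_pos hq0 hq1 hq0.le hq1 n
    rw [qPoch_succ]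
    rw [mul_pow]
    field_simp
    ring
  have h6 := h1.mul_left x
  have h7 : HasSum (fun n : ℕ => x * (x ^ n / qPoch q q n))
      (G q x - G q (q * x) - ∑ i ∈ Finset.range 1, (x ^ i / qPoch q q i - (q*x) ^ i / qPoch q q i)) := by
    apply h4.congr_fun
    intro n
    exact (h5 n).symm
  have h8 := h6.unique h7
  simp only [Finset.range_one, Finset.sum_singleton, pow_zero] at h8
  have h9 : qPoch q q 0 = 1 := by simp [qPoch]
  rw [h9] at h8
  norm_num at h8
  linarith

lemma iterEq (hq0 : 0 < q) (hq1 : q < 1) {x : ℝ} (hx0 : 0 ≤ x) (hx1 : x < 1) (N : ℕ) :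
    G q (q ^ N * x) = qPoch x q N * G q x := by
  induction N with
  | zero => simp [qPoch]
  | succ n ih =>
    have hx0' : 0 ≤ q ^ n * x := by positivity
    have hx1' : q ^ n * x < 1 := by
      have : q ^ n ≤ 1 := pow_le_one₀ hq0.le hq1.le
      nlinarith
    have step := funEq hq0 hq1 hx0' hx1'
    have : q * (q ^ n * x) = q ^ (n+1) * x := by ring
    rw [this] at step
    rw [step, ih, qPoch_succ]
    ring

lemma G_bounds (hq0 : 0 < q) (hq1 : q < 1) {x y : ℝ} (hx1 : x < 1)
    (hy0 : 0 ≤ y) (hyx : y ≤ x) :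
    1 ≤ G q y ∧ G q y ≤ 1 + y * ((Cq q)⁻¹ * (1 - x)⁻¹) := by
  have hx0 : 0 ≤ x := le_trans hy0 hyx
  have h1 := hasSum_G hq0 hq1 hy0 (lt_of_le_of_lt hyx hx1)
  have h4 := (hasSum_nat_add_iff' (f := fun n : ℕ => y ^ n / qPoch q q n) 1).mpr h1
  simp only [Finset.range_one, Finset.sum_singleton, pow_zero] at h4
  have h9 : qPoch q q 0 = 1 := by simp [qPoch]
  rw [h9] at h4
  norm_num at h4
  -- h4 : HasSum (fun n => y^(n+1) / qPoch q q (n+1)) (G q y - 1)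
  have hnn : ∀ n : ℕ, 0 ≤ y ^ (n+1) / qPoch q q (n+1) := by
    intro n
    have := qPoch_pos hq0 hq1 hq0.le hq1 (n+1)
    positivity
  constructor
  · have hge : 0 ≤ G q y - 1 := hasSum_le (fun n => hnn n) hasSum_zero h4
    linarith
  · have hb : HasSum (fun n : ℕ => y * ((Cq q)⁻¹ * x ^ n))
        (y * ((Cq q)⁻¹ * (1 - x)⁻¹)) := by
      apply HasSum.mul_left
      apply HasSum.mul_left
      exact hasSum_geometric_of_lt_one hx0 hx1
    have hle : G q y - 1 ≤ y * ((Cq q)⁻¹ * (1 - x)⁻¹) := by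
      apply hasSum_le _ h4 hb
      intro n
      have hp := qPoch_pos hq0 hq1 hq0.le hq1 (n+1)
      have hcp := Cq_le_qPoch hq0 hq1 (n+1)
      have hc := Cq_pos (q := q)
      have hyn : y ^ (n+1) ≤ y * x ^ n := by
        rw [pow_succ']
        apply mul_le_mul_of_nonneg_left _ hy0
        exact pow_le_pow_left₀ hy0 hyx n
      calc y ^ (n+1) / qPoch q q (n+1) ≤ y ^ (n+1) / Cq q := by
            apply div_le_div_of_nonneg_left (by positivity) hc hcp
        _ ≤ (y * x ^ n) / Cq q := (div_le_div_iff_of_pos_right hc).mpr hyn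
        _ = y * ((Cq q)⁻¹ * x ^ n) := by ring
    linarith

end Stmt6Aux
end part3

section part4
namespace Stmt6Aux

variable {q : ℝ}

lemma euler (hq0 : 0 < q) (hq1 : q < 1) {x : ℝ} (hx0 : 0 ≤ x) (hx1 : x < 1) :
    qPochInf x q * G q x = 1 := by
  have hp := (hasProd_qPochInf hq0 hq1 hx0 hx1).1
  have t1 : Filter.Tendsto (fun N : ℕ => qPoch x q N * G q x) Filter.atTop
      (nhds (qPochInf x q * G q x)) := by
    have := hp.tendsto_prod_nat.mul_const (G q x)
    exact this
  have t2 : Filter.Tendsto (fun N : ℕ => qPoch x q N * G q x) Filter.atTop (nhds 1) := by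
    have hqpow : ∀ N : ℕ, q ^ N * x ≤ x := by
      intro N
      have h1 : q ^ N ≤ 1 := pow_le_one₀ hq0.le hq1.le
      nlinarith
    have hiter : (fun N : ℕ => qPoch x q N * G q x) = fun N : ℕ => G q (q ^ N * x) :=
      funext fun N => (iterEq hq0 hq1 hx0 hx1 N).symm
    rw [hiter]
    set K := (Cq q)⁻¹ * (1 - x)⁻¹ with hK
    have hlow : ∀ N : ℕ, (1:ℝ) ≤ G q (q ^ N * x) := fun N =>
      (G_bounds hq0 hq1 hx1 (by positivity) (hqpow N)).1
    have hupp : ∀ N : ℕ, G q (q ^ N * x) ≤ 1 + q ^ N * x * K := fun N =>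
      (G_bounds hq0 hq1 hx1 (by positivity) (hqpow N)).2
    have tupp : Filter.Tendsto (fun N : ℕ => 1 + q ^ N * x * K) Filter.atTop (nhds 1) := by
      have h0 : Filter.Tendsto (fun N : ℕ => q ^ N) Filter.atTop (nhds 0) :=
        tendsto_pow_atTop_nhds_zero_of_lt_one hq0.le hq1
      have := ((h0.mul_const x).mul_const K).const_add 1
      simpa using this
    exact tendsto_of_tendsto_of_tendsto_of_le_of_le
      (tendsto_const_nhds) tupp hlow hupp
  exact tendsto_nhds_unique t1 t2

lemma euler_q (hq0 : 0 < q) (hq1 : q < 1) (k : ℕ) :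
    qPochInf q q * G q (q ^ (k+1)) = qPoch q q k := by
  have hk1 : q ^ (k+1) < 1 := pow_lt_one₀ hq0.le hq1 (by omega)
  rw [← qPochInf_split hq0 hq1 k, mul_assoc, euler hq0 hq1 (by positivity) hk1, mul_one]

lemma qFactorial_mul (hq1 : q < 1) (n : ℕ) :
    qFactorial q n * (1 - q) ^ n = qPoch q q n := by
  induction n with
  | zero => simp [qFactorial, qPoch]
  | succ n ih =>
    have h1 : q - 1 ≠ 0 := sub_ne_zero.mpr (ne_of_lt hq1)
    have h : qNat q (n+1) * (1 - q) = 1 - q * q ^ n := by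
      rw [qNat, geom_sum_eq (ne_of_lt hq1)]
      field_simp
      ring
    rw [qPoch_succ, ← ih, qFactorial]
    calc qFactorial q n * qNat q (n+1) * (1 - q) ^ (n+1)
        = qFactorial q n * (1-q) ^ n * (qNat q (n+1) * (1 - q)) := by ring
      _ = qFactorial q n * (1-q) ^ n * (1 - q * q ^ n) := by rw [h]

end Stmt6Aux
end part4

set_option maxHeartbeats 2000000 in
open Stmt6Aux in
/-- for `ψ` holomorphic on `D_R` and `|z| < (1-q)R`, both series converge and
`Σ [n]_q! ψ⁽ⁿ⁾(0) zⁿ/n! = (q;q)_∞ · Σ qⁿ ψ(zqⁿ/(1-q))/(q;q)_n`. -/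
theorem stmt6 (q R : ℝ) (hq0 : 0 < q) (hq1 : q < 1) (hR : 0 < R)
    (E : Type) [NormedAddCommGroup E] [NormedSpace ℂ E] [CompleteSpace E]
    (ψ : ℂ → E) (hψ : DifferentiableOn ℂ ψ (Metric.ball 0 R))
    (z : ℂ) (hz : ‖z‖ < (1 - q) * R) :
    ∃ s s' : E,
      HasSum (fun n : ℕ =>
        ((qFactorial q n / (n.factorial : ℝ) : ℝ) : ℂ) • (z ^ n • iteratedDeriv n ψ 0)) s ∧
      HasSum (fun n : ℕ =>
        ((q ^ n / qPoch q q n : ℝ) : ℂ) • ψ (z * (q : ℂ) ^ n / ((1 - q : ℝ) : ℂ))) s' ∧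
      s = ((qPochInf q q : ℝ) : ℂ) • s' := by
  have h1q : (0:ℝ) < 1 - q := by linarith
  set c : ℂ := ((1 - q : ℝ) : ℂ) with hc_def
  have hcne : c ≠ 0 := by
    rw [hc_def, ne_eq, Complex.ofReal_eq_zero]
    exact ne_of_gt h1q
  set ρ : ℝ := ‖z‖ / (1 - q) with hρ_def
  have hρ0 : 0 ≤ ρ := by rw [hρ_def]; positivity
  have hρR : ρ < R := by
    rw [hρ_def, div_lt_iff₀ h1q]
    linarith [hz]
  set w : ℕ → ℂ := fun n => z * (q : ℂ) ^ n / c with hw_def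
  have habs : ∀ n : ℕ, ‖w n‖ = ‖z‖ * q ^ n / (1 - q) := by
    intro n
    rw [hw_def]
    simp only [hc_def, norm_div, norm_mul, norm_pow, Complex.norm_real, Real.norm_eq_abs,
      abs_of_pos hq0, abs_of_pos h1q]
  have habsρ : ∀ n : ℕ, ‖w n‖ ≤ ρ := by
    intro n
    rw [habs, hρ_def]
    have h1 : q ^ n ≤ 1 := pow_le_one₀ hq0.le hq1.le
    have h2 : ‖z‖ * q ^ n ≤ ‖z‖ := by
      nlinarith [norm_nonneg z]
    exact (div_le_div_iff_of_pos_right h1q).mpr h2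
  have hwball : ∀ n : ℕ, w n ∈ Metric.ball (0:ℂ) R := by
    intro n
    rw [Metric.mem_ball, dist_zero_right]
    exact lt_of_le_of_lt (habsρ n) hρR
  -- Taylor expansion
  set a : ℕ → E := fun k => (k.factorial : ℂ)⁻¹ • iteratedDeriv k ψ 0 with ha_def
  have htaylor : ∀ w' ∈ Metric.ball (0:ℂ) R, HasSum (fun k : ℕ => w' ^ k • a k) (ψ w') := by
    intro w' hw'
    have h0 := Complex.hasSum_taylorSeries_on_ball hψ hw'
    simp only [sub_zero] at h0
    apply h0.congr_fun
    intro k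
    simp only [ha_def]
    exact (smul_comm _ _ _)
  clear_value c ρ w a
  -- growth bound on coefficients
  obtain ⟨r, hρr, hrR⟩ := exists_between hρR
  have hr0 : 0 < r := lt_of_le_of_lt hρ0 hρr
  have hrne : r ≠ 0 := ne_of_gt hr0
  have hrball : ((r:ℝ):ℂ) ∈ Metric.ball (0:ℂ) R := by
    rw [Metric.mem_ball, dist_zero_right, Complex.norm_real, Real.norm_eq_abs,
      abs_of_pos hr0]
    exact hrR
  have hsum_r := htaylor _ hrball
  have htend : Filter.Tendsto (fun k : ℕ => ‖a k‖ * r ^ k) Filter.atTop (nhds 0) := by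
    have h0 := hsum_r.summable.tendsto_atTop_zero.norm
    simp only [norm_zero] at h0
    apply h0.congr
    intro k
    rw [norm_smul, norm_pow, Complex.norm_real, Real.norm_eq_abs, abs_of_pos hr0]
    ring
  obtain ⟨M, hM⟩ := htend.bddAbove_range
  have hMle : ∀ k : ℕ, ‖a k‖ * r ^ k ≤ M := fun k => hM (Set.mem_range_self k)
  -- summability of the coefficient series at radius ρ
  have Sa : Summable (fun k : ℕ => ‖a k‖ * ρ ^ k) := by
    apply Summable.of_nonneg_of_le (fun k => by positivity)
      (fun k => ?_) ((summable_geometric_of_lt_one (by positivity)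
        ((div_lt_one hr0).mpr hρr)).mul_left M)
    have heq : ‖a k‖ * ρ ^ k = (‖a k‖ * r ^ k) * (ρ / r) ^ k := by
      rw [div_pow]
      field_simp
    rw [heq]
    exact mul_le_mul_of_nonneg_right (hMle k) (by positivity)
  -- the double sum
  set F : ℕ × ℕ → E := fun p =>
    ((q ^ p.1 / qPoch q q p.1 : ℝ) : ℂ) • ((w p.1) ^ p.2 • a p.2) with hF_def
  have hFnorm : ∀ p : ℕ × ℕ, ‖F p‖ ≤ ((Cq q)⁻¹ * q ^ p.1) * (‖a p.2‖ * ρ ^ p.2) := by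
    rintro ⟨n, k⟩
    have hp := qPoch_pos hq0 hq1 hq0.le hq1 n
    have hcq := Cq_pos (q := q)
    have hcp := Cq_le_qPoch hq0 hq1 n
    have hx : (0:ℝ) < q ^ n / qPoch q q n := div_pos (pow_pos hq0 n) hp
    simp only [hF_def]
    rw [norm_smul, norm_smul, Complex.norm_real, Real.norm_eq_abs, abs_of_pos hx,
      norm_pow]
    have h1 : ‖w n‖ ^ k ≤ ρ ^ k := pow_le_pow_left₀ (norm_nonneg _) (habsρ n) k
    have h2 : q ^ n / qPoch q q n ≤ (Cq q)⁻¹ * q ^ n := by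
      rw [div_le_iff₀ hp]
      have h3 : (Cq q)⁻¹ * q ^ n * qPoch q q n = q ^ n * (qPoch q q n / Cq q) := by
        field_simp
      rw [h3]
      nth_rewrite 1 [← mul_one (q ^ n)]
      apply mul_le_mul_of_nonneg_left _ (by positivity)
      rw [le_div_iff₀ hcq, one_mul]
      exact hcp
    calc q ^ n / qPoch q q n * (‖w n‖ ^ k * ‖a k‖)
        ≤ ((Cq q)⁻¹ * q ^ n) * (ρ ^ k * ‖a k‖) := by
          apply mul_le_mul h2 _ (by positivity) (by positivity)
          exact mul_le_mul_of_nonneg_right h1 (norm_nonneg _)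
      _ = ((Cq q)⁻¹ * q ^ n) * (‖a k‖ * ρ ^ k) := by ring
  have hgsum : Summable (fun p : ℕ × ℕ =>
      ((Cq q)⁻¹ * q ^ p.1) * (‖a p.2‖ * ρ ^ p.2)) := by
    apply Summable.mul_of_nonneg
      ((summable_geometric_of_lt_one hq0.le hq1).mul_left _) Sa
    · intro n
      exact mul_nonneg (inv_nonneg.mpr (Cq_pos (q := q)).le) (pow_nonneg hq0.le n)
    · intro k
      exact mul_nonneg (norm_nonneg _) (pow_nonneg hρ0 _)
  have hFs : Summable F := Summable.of_norm_bounded hgsum hFnorm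
  obtain ⟨S', hF⟩ := hFs
  -- fiberwise in n : gives the second series
  have hfib : ∀ n : ℕ, HasSum (fun k => F (n, k))
      (((q ^ n / qPoch q q n : ℝ) : ℂ) • ψ (w n)) := by
    intro n
    exact (htaylor _ (hwball n)).const_smul _
  have hs' : HasSum (fun n : ℕ =>
      ((q ^ n / qPoch q q n : ℝ) : ℂ) • ψ (w n)) S' := hF.prod_fiberwise hfib
  -- swap and sum fiberwise in k
  have hFswap : HasSum (fun p : ℕ × ℕ => F (p.2, p.1)) S' :=
    ((Equiv.prodComm ℕ ℕ).hasSum_iff).mpr hF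
  have hterm : ∀ n k : ℕ, F (n, k)
      = (((q ^ (k+1)) ^ n / qPoch q q n : ℝ) : ℂ) • ((z / c) ^ k • a k) := by
    intro n k
    simp only [hF_def, hw_def]
    rw [smul_smul, smul_smul]
    congr 1
    rw [hc_def]
    push_cast
    have hPne : ((qPoch q q n : ℝ) : ℂ) ≠ 0 := by
      rw [ne_eq, Complex.ofReal_eq_zero]
      exact ne_of_gt (qPoch_pos hq0 hq1 hq0.le hq1 n)
    have h1qc : ((1:ℂ) - (q:ℂ)) ≠ 0 := by
      rw [show ((1:ℂ) - (q:ℂ)) = ((1 - q : ℝ) : ℂ) by push_cast; ring, ne_eq,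
        Complex.ofReal_eq_zero]
      exact ne_of_gt h1q
    field_simp
    ring
  have hfib2 : ∀ k : ℕ, HasSum (fun n => F (n, k))
      (((G q (q ^ (k+1)) : ℝ) : ℂ) • ((z / c) ^ k • a k)) := by
    intro k
    have hx0 : (0:ℝ) ≤ q ^ (k+1) := by positivity
    have hx1 : q ^ (k+1) < 1 := pow_lt_one₀ hq0.le hq1 (by omega)
    have hG := hasSum_G hq0 hq1 hx0 hx1
    have hGc := (Complex.hasSum_ofReal).mpr hG
    have h5 := hGc.smul_const ((z / c) ^ k • a k)
    apply h5.congr_fun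
    intro n
    exact hterm n k
  have h2 : HasSum (fun k : ℕ =>
      ((G q (q ^ (k+1)) : ℝ) : ℂ) • ((z / c) ^ k • a k)) S' :=
    hFswap.prod_fiberwise hfib2
  -- multiply by (q;q)_∞ and identify with the first series
  have h3 := h2.const_smul ((qPochInf q q : ℝ) : ℂ)
  refine ⟨((qPochInf q q : ℝ) : ℂ) • S', S', ?_, ?_, rfl⟩
  · apply h3.congr_fun
    intro k
    have hcomb : ((qFactorial q k : ℝ) : ℂ) * ((1:ℂ) - (q:ℂ)) ^ k
        = ((qPochInf q q : ℝ) : ℂ) * ((G q (q ^ (k+1)) : ℝ) : ℂ) := by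
      rw [← Complex.ofReal_mul, euler_q hq0 hq1 k, ← qFactorial_mul hq1 k]
      push_cast
      ring
    have hfacC : ((k.factorial : ℂ)) ≠ 0 := Nat.cast_ne_zero.mpr k.factorial_ne_zero
    have h1qc : ((1:ℂ) - (q:ℂ)) ≠ 0 := by
      rw [show ((1:ℂ) - (q:ℂ)) = ((1 - q : ℝ) : ℂ) by push_cast; ring, ne_eq,
        Complex.ofReal_eq_zero]
      exact ne_of_gt h1q
    simp only [ha_def, hc_def]
    rw [smul_smul, smul_smul, smul_smul, smul_smul]
    congr 1
    push_cast
    field_simp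
    linear_combination (z ^ k * ((1:ℂ) - q)⁻¹ ^ k) * hcomb - ((qFactorial q k : ℂ) * z ^ k) * (by rw [← mul_pow, inv_mul_cancel₀ h1qc, one_pow] : ((1:ℂ) - q)⁻¹ ^ k * (1 - q) ^ k = 1)
  · apply hs'.congr_fun
    intro n
    rw [hw_def, hc_def]
end
end

section
/- Let m = (m(n))_{n≥0} be a sequence of positive real numbers with m(0) = 1, let P(λ,ζ) be a complex polynomial of degree p ≥ 1 in λ, let D ⊂ ℂ be a disc centred at 0, let φ₀,…,φ_{p−1} be holomorphic on D, and let (uₙ)_{n≥0} be holomorphic functions on D. Then û(t,z) = Σ (uₙ(z)/m(n))tⁿ is a formal power series solution of the Cauchy problem P(∂_{m,t},∂_z)u = 0, ∂ʲ_{m,t}u(0,z) = φ_j(z) for j = 0,…,p−1, if and only if v̂(t,z) = Σ uₙ(z)tⁿ is a formal power series solution of the Cauchy problem P(∂_{𝟏,t},∂_z)v = 0, ∂ʲ_{𝟏,t}v(0,z) = φ_j(z) for j = 0,…,p−1. -/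
noncomputable section

/-- The moment differentiation `∂_{m,t}` acting on the family of coefficient functions of a
series `Σ wₙ(z) tⁿ ∈ O(D)[[t]]`. -/
def Tmom (m : ℕ → ℝ) (w : ℕ → ℂ → ℂ) : ℕ → ℂ → ℂ :=
  fun n z => ((m (n + 1) / m n : ℝ) : ℂ) * w (n + 1) z

/-- The complex derivative `∂_z` applied coefficientwise to `Σ wₙ(z) tⁿ`. -/
def Zder (w : ℕ → ℂ → ℂ) : ℕ → ℂ → ℂ := fun n z => deriv (w n) z

/-- The action of `P(∂_{m,t}, ∂_z)` on `Σ wₙ(z)tⁿ`, where `P(λ,ζ) = Σ_{i,j} c_{ij} λ^i ζ^j`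
is encoded as a polynomial in `λ` (outer variable) with coefficients polynomials in `ζ`. -/
def PApply (m : ℕ → ℝ) (P : Polynomial (Polynomial ℂ)) (w : ℕ → ℂ → ℂ) : ℕ → ℂ → ℂ :=
  fun n z => ∑ i ∈ Finset.range (P.natDegree + 1),
    ∑ j ∈ Finset.range ((P.coeff i).natDegree + 1),
      (P.coeff i).coeff j * ((Tmom m)^[i] (Zder^[j] w)) n z

/-- `w` (the coefficients of `û = Σ wₙ(z)tⁿ`) is a formal power series solution of the Cauchy
problem `P(∂_{m,t},∂_z)u = 0`, `∂ʲ_{m,t}u(0,z) = φ_j(z)` (`j = 0,…,p-1`) on the disc `D_R`. -/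
def IsCauchySol (m : ℕ → ℝ) (P : Polynomial (Polynomial ℂ)) (R : ℝ) (p : ℕ)
    (φ : ℕ → ℂ → ℂ) (w : ℕ → ℂ → ℂ) : Prop :=
  (∀ n, ∀ z ∈ Metric.ball (0 : ℂ) R, PApply m P w n z = 0) ∧
  (∀ j < p, ∀ z ∈ Metric.ball (0 : ℂ) R, ((Tmom m)^[j] w) 0 z = φ j z)

/-!
Rescaling the coefficients by `1/m(n)` conjugates `∂_{m,t}` into `∂_{𝟏,t}`: the `n`-th coefficient
of `∂ⁱ_{m,t} Σ (uₙ/m(n)) tⁿ` is `u_{n+i}/m(n)`, while `∂_z` commutes with any such rescaling.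
Hence the `n`-th coefficient of `P(∂_{m,t},∂_z)û` is `1/m(n)` times that of `P(∂_{𝟏,t},∂_z)v̂`,
and since `m(0) = 1` the initial data of `û` and `v̂` coincide.
-/

lemma Tmom_one_iterate (v : ℕ → ℂ → ℂ) (i : ℕ) :
    (Tmom fun _ => 1)^[i] v = fun n z => v (n + i) z := by
  induction i with
  | zero => rfl
  | succ i ih =>
    rw [Function.iterate_succ_apply', ih]
    funext n z
    simp [Tmom, add_assoc, add_comm 1 i]

lemma Zder_iterate_const_mul (c : ℕ → ℂ) (v : ℕ → ℂ → ℂ) (j : ℕ) :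
    Zder^[j] (fun n z => c n * v n z) = fun n z => c n * Zder^[j] v n z := by
  induction j with
  | zero => rfl
  | succ j ih =>
    rw [Function.iterate_succ_apply', ih, Function.iterate_succ_apply']
    funext n z
    simp [Zder, deriv_const_mul_field]

lemma Tmom_iterate_inv_mul {m : ℕ → ℝ} (hm : ∀ n, m n ≠ 0) (v : ℕ → ℂ → ℂ) (i : ℕ) :
    (Tmom m)^[i] (fun n z => ((m n : ℝ) : ℂ)⁻¹ * v n z)
      = fun n z => ((m n : ℝ) : ℂ)⁻¹ * v (n + i) z := by
  induction i with
  | zero => rfl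
  | succ i ih =>
    rw [Function.iterate_succ_apply', ih]
    funext n z
    have hn : (m n : ℂ) ≠ 0 := Complex.ofReal_ne_zero.mpr (hm n)
    have hn1 : (m (n + 1) : ℂ) ≠ 0 := Complex.ofReal_ne_zero.mpr (hm (n + 1))
    simp only [Tmom, Complex.ofReal_div]
    field_simp
    ring_nf

lemma PApply_inv_mul {m : ℕ → ℝ} (hm : ∀ n, m n ≠ 0) (P : Polynomial (Polynomial ℂ))
    (v : ℕ → ℂ → ℂ) (n : ℕ) (z : ℂ) :
    PApply m P (fun n z => ((m n : ℝ) : ℂ)⁻¹ * v n z) n z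
      = ((m n : ℝ) : ℂ)⁻¹ * PApply (fun _ => 1) P v n z := by
  simp only [PApply, Finset.mul_sum]
  refine Finset.sum_congr rfl fun i _ => Finset.sum_congr rfl fun j _ => ?_
  rw [Zder_iterate_const_mul, Tmom_iterate_inv_mul hm, Tmom_one_iterate]
  ring

lemma Tmom_iterate_inv_mul_zero {m : ℕ → ℝ} (hm : ∀ n, m n ≠ 0) (hm0 : m 0 = 1)
    (v : ℕ → ℂ → ℂ) (j : ℕ) (z : ℂ) :
    (Tmom m)^[j] (fun n z => ((m n : ℝ) : ℂ)⁻¹ * v n z) 0 z = (Tmom fun _ => 1)^[j] v 0 z := by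
  simp [Tmom_iterate_inv_mul hm, Tmom_one_iterate, hm0]

theorem stmt11_general (m : ℕ → ℝ) (hpos : ∀ n, 0 < m n) (hm0 : m 0 = 1)
    (P : Polynomial (Polynomial ℂ)) (p : ℕ) (R : ℝ) (φ : ℕ → ℂ → ℂ) (u : ℕ → ℂ → ℂ) :
    IsCauchySol m P R p φ (fun n z => ((m n : ℝ) : ℂ)⁻¹ * u n z)
      ↔ IsCauchySol (fun _ => 1) P R p φ u := by
  have hm : ∀ n, m n ≠ 0 := fun n => (hpos n).ne'
  have hm_inv : ∀ n, ((m n : ℝ) : ℂ)⁻¹ ≠ 0 := fun n =>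
    inv_ne_zero (Complex.ofReal_ne_zero.mpr (hm n))
  unfold IsCauchySol
  simp only [PApply_inv_mul hm, Tmom_iterate_inv_mul_zero hm hm0, mul_eq_zero, hm_inv, false_or]

/-- `û(t,z) = Σ (uₙ(z)/m(n))tⁿ` solves `P(∂_{m,t},∂_z)u = 0` with data
`φ_0,…,φ_{p-1}` iff `v̂(t,z) = Σ uₙ(z)tⁿ` solves `P(∂_{𝟏,t},∂_z)v = 0` with the same data. -/
theorem stmt11 (m : ℕ → ℝ) (hpos : ∀ n, 0 < m n) (hm0 : m 0 = 1)
    (P : Polynomial (Polynomial ℂ)) (p : ℕ) (hp : 1 ≤ p) (hdeg : P.natDegree = p)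
    (R : ℝ) (hR : 0 < R)
    (φ : ℕ → ℂ → ℂ) (hφ : ∀ j < p, DifferentiableOn ℂ (φ j) (Metric.ball 0 R))
    (u : ℕ → ℂ → ℂ) (hu : ∀ n, DifferentiableOn ℂ (u n) (Metric.ball 0 R)) :
    IsCauchySol m P R p φ (fun n z => ((m n : ℝ) : ℂ)⁻¹ * u n z)
      ↔ IsCauchySol (fun _ => 1) P R p φ u :=
  stmt11_general m hpos hm0 P p R φ u
end
end

section
/- Let m be the sequence defined by m(n) = 1 for n even and m(n) = 1/2 for n odd. Then: (i) m is a sequence of order 0 (there exist a, A > 0 with aⁿ ≤ m(n) ≤ Aⁿ for all n); (ii) the formal power series Σ n!·tⁿ ∈ ℂ[[t]] is 1-summable in the direction π; (iii) the formal power series Σ (n!/m(n))·tⁿ is NOT 1-summable in the direction π. Consequently m does not preserve summability. -/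
open scoped Real

noncomputable section

variable {E : Type*} [NormedAddCommGroup E] [NormedSpace ℂ E]

/-- The sequence `m(n) = 1` for even `n` and `m(n) = 1/2` for odd `n`. -/
def mExample : ℕ → ℝ := fun n => if Even n then 1 else 1 / 2

lemma neg_real_mem_sector {α : ℝ} (hα : 0 < α) {s : ℝ} (hs : 0 < s) :
    (-(s : ℂ)) ∈ Sector π α := by
  refine ⟨by simpa using hs.ne', π, by simpa using by positivity, ?_⟩
  have : ‖(-(s:ℂ))‖ = s := by
    simpa [Complex.norm_real] using abs_of_pos hs
  rw [this, Complex.exp_pi_mul_I]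
  ring

lemma re_neg_of_mem_sector {z : ℂ} (hz : z ∈ Sector π π) : z.re < 0 := by
  obtain ⟨hz0, φ, hφ, hzeq⟩ := hz
  have habs : 0 < ‖z‖ := norm_pos_iff.mpr hz0
  have hre : z.re = ‖z‖ * Real.cos φ := by
    rw [hzeq]
    simp [Complex.exp_mul_I, Complex.add_re, Complex.mul_re, Complex.cos_ofReal_re,
      Complex.sin_ofReal_re]
  have hφ' := abs_lt.mp hφ
  have hcos : Real.cos φ < 0 :=
    Real.cos_neg_of_pi_div_two_lt_of_lt (by linarith [hφ'.1]) (by linarith [hφ'.2])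
  rw [hre]
  exact mul_neg_of_pos_of_neg habs hcos

lemma cone_mem_sector {α γ : ℝ} (hγ0 : 0 < γ) (hγ2 : γ ≤ π / 4) (hγα : γ < α / 2)
    {z : ℂ} (hre : z.re < 0) (him : |z.im| < Real.tan γ * (-z.re)) :
    z ∈ Sector π α := by
  have hπ := Real.pi_pos
  have hz0 : z ≠ 0 := fun h => by simp [h] at hre
  have habs : 0 < ‖z‖ := norm_pos_iff.mpr hz0
  have hcos : 0 < Real.cos γ := Real.cos_pos_of_mem_Ioo ⟨by linarith, by linarith⟩
  have hsin : 0 < Real.sin γ := Real.sin_pos_of_pos_of_lt_pi hγ0 (by linarith)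
  have hsq : ‖z‖ ^ 2 = z.re ^ 2 + z.im ^ 2 := by
    rw [Complex.sq_norm, Complex.normSq_apply]; ring
  -- |z.im| < sin γ * |z|
  have h1 : |z.im| * Real.cos γ < Real.sin γ * (-z.re) := by
    rw [Real.tan_eq_sin_div_cos, div_mul_eq_mul_div] at him
    exact (lt_div_iff₀ hcos).mp him
  have key : |z.im| < Real.sin γ * ‖z‖ := by
    have h2 : (|z.im| * Real.cos γ) ^ 2 < (Real.sin γ * (-z.re)) ^ 2 := by
      apply pow_lt_pow_left₀ h1 (by positivity)
      norm_num
    have hpyth := Real.sin_sq_add_cos_sq γ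
    have h3 : |z.im| ^ 2 < (Real.sin γ * ‖z‖) ^ 2 := by
      have him2 : |z.im| ^ 2 = z.im ^ 2 := sq_abs _
      nlinarith [sq_abs z.im]
    exact lt_of_pow_lt_pow_left₀ 2 (by positivity) h3
  set u : ℝ := z.im / ‖z‖ with hu
  have hu1 : |u| < Real.sin γ := by
    rw [hu, abs_div, abs_of_pos habs]
    exact (div_lt_iff₀ habs).mpr key
  have husin : Real.sin γ ≤ 1 := Real.sin_le_one γ
  have hu2 : |u| < 1 := lt_of_lt_of_le hu1 husin
  have hu3 : -1 ≤ u := by cases' abs_lt.mp hu2 with h _; linarith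
  have hu4 : u ≤ 1 := by cases' abs_lt.mp hu2 with _ h; linarith
  have harcs : |Real.arcsin u| < γ := by
    rw [abs_lt]
    constructor
    · rw [Real.lt_arcsin_iff_sin_lt' ⟨by linarith, by linarith⟩, Real.sin_neg]
      linarith [neg_abs_le u, (abs_lt.mp hu1).1]
    · rw [Real.arcsin_lt_iff_lt_sin' ⟨by linarith, by linarith⟩]
      linarith [le_abs_self u, (abs_lt.mp hu1).2]
  refine ⟨hz0, π - Real.arcsin u, ?_, ?_⟩
  · have : π - Real.arcsin u - π = -Real.arcsin u := by ring
    rw [this, abs_neg]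
    linarith
  · have h5 : 1 - u ^ 2 = (z.re / ‖z‖) ^ 2 := by
      rw [hu]
      field_simp
      linarith [hsq]
    have hsin_eq : Real.sin (π - Real.arcsin u) = u := by
      rw [Real.sin_pi_sub, Real.sin_arcsin hu3 hu4]
    have hcos_eq : Real.cos (π - Real.arcsin u) = z.re / ‖z‖ := by
      rw [Real.cos_pi_sub, Real.cos_arcsin, h5, Real.sqrt_sq_eq_abs, abs_div,
        abs_of_pos habs, abs_of_neg hre]
      ring
    generalize hφ : π - Real.arcsin u = φ at hsin_eq hcos_eq
    apply Complex.ext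
    · have h6 : (((‖z‖ : ℝ) : ℂ) * Complex.exp ((φ : ℂ) * Complex.I)).re
          = ‖z‖ * Real.cos φ := by
        simp [Complex.exp_mul_I, Complex.mul_re, Complex.add_re, Complex.cos_ofReal_re,
          Complex.sin_ofReal_re]
      rw [h6, hcos_eq]
      field_simp
    · have h6 : (((‖z‖ : ℝ) : ℂ) * Complex.exp ((φ : ℂ) * Complex.I)).im
          = ‖z‖ * Real.sin φ := by
        simp [Complex.exp_mul_I, Complex.mul_im, Complex.add_im, Complex.cos_ofReal_re,
          Complex.sin_ofReal_re]
      rw [h6, hsin_eq, hu]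
      field_simp

lemma sector_mono {d α β : ℝ} (h : α ≤ β) : Sector d α ⊆ Sector d β := by
  rintro z ⟨hz, φ, hφ, he⟩
  exact ⟨hz, φ, lt_of_lt_of_le hφ (by linarith), he⟩

lemma bound_one_sub {α' r' : ℝ} (hα' : α' ≤ π) (hr' : r' ≤ 1/2) {x : ℂ}
    (hx : x ∈ DiscSector π α' r') : (1/2 : ℝ) ≤ ‖1 - x‖ := by
  rcases hx with hx | hx
  · have hre := re_neg_of_mem_sector (sector_mono hα' hx)
    have h1 : (1 - x).re ≤ ‖1 - x‖ := Complex.re_le_norm _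
    have h2 : (1 - x).re = 1 - x.re := by simp [Complex.sub_re]
    linarith
  · rw [Metric.mem_ball, dist_zero_right] at hx
    have h1 : ‖(1:ℂ)‖ - ‖x‖ ≤ ‖1 - x‖ := norm_sub_norm_le _ _
    simp only [norm_one] at h1 hx ⊢
    linarith

lemma summable_factorial : KSummable 1 π (fun n : ℕ => ((n.factorial : ℝ) : ℂ)) := by
  have hπ := Real.pi_pos
  have hcoeff : (fun n : ℕ => ((Real.Gamma (1 + (n : ℝ) / 1) : ℂ))⁻¹ • ((n.factorial : ℝ) : ℂ))
      = fun _ : ℕ => (1 : ℂ) := by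
    funext n
    rw [div_one, add_comm, Real.Gamma_nat_eq_factorial, smul_eq_mul]
    push_cast
    rw [inv_mul_cancel₀]
    exact_mod_cast Nat.cast_ne_zero.mpr n.factorial_ne_zero
  unfold KSummable
  rw [hcoeff]
  refine ⟨π, 1/2, hπ, by linarith, by norm_num, fun z => (1 - z)⁻¹, ?_, ?_, 1/2, by norm_num,
    le_refl _, ?_⟩
  · intro z hz
    have h1 : (1 : ℂ) - z ≠ 0 := by
      intro h
      have := bound_one_sub (le_refl π) (le_refl (1/2)) hz
      rw [h] at this
      simp at this
      linarith
    exact (((differentiableAt_const (1:ℂ)).sub differentiableAt_id).inv h1).differentiableWithinAt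
  · intro α' hα' r' hr'
    refine ⟨2, 1, by norm_num, by norm_num, ?_⟩
    intro x hx
    have hb : (1/2 : ℝ) ≤ ‖1 - x‖ :=
      bound_one_sub (le_of_lt hα'.2) (le_of_lt hr'.2)
        (Set.union_subset_union (sector_mono (le_refl _)) (Metric.ball_subset_ball (le_refl _)) hx)
    have : ‖(1 - x)⁻¹‖ ≤ 2 := by
      rw [norm_inv]
      rw [show ((2:ℝ) = (1/2)⁻¹) by norm_num]
      apply inv_anti₀ (by norm_num)
      exact hb
    refine this.trans ?_
    have h2 : (1:ℝ) ≤ Real.exp (1 * ‖x‖ ^ (1:ℝ)) :=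
      Real.one_le_exp (by positivity)
    nlinarith
  · intro t ht
    rw [Metric.mem_ball, dist_zero_right] at ht
    have := hasSum_geometric_of_norm_lt_one (ξ := t) (by linarith)
    simpa using this

/-- The "true sum" function for part (iii). -/
def gFun : ℂ → ℂ := fun z => (3/2 : ℂ) * (1 - z)⁻¹ - (1/2 : ℂ) * (1 + z)⁻¹

lemma gFun_hasSum {t : ℂ} (ht : ‖t‖ < 1) :
    HasSum (fun n : ℕ => t ^ n • ((3:ℂ)/2 - (-1) ^ n / 2)) (gFun t) := by
  have h1 := (hasSum_geometric_of_norm_lt_one (ξ := t) ht).mul_left (3/2 : ℂ)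
  have h2 := (hasSum_geometric_of_norm_lt_one (ξ := -t) (by simpa using ht)).mul_left (1/2 : ℂ)
  have h3 := h1.sub h2
  have he : (fun n : ℕ => (3/2 : ℂ) * t ^ n - (1/2 : ℂ) * (-t) ^ n)
      = fun n : ℕ => t ^ n • ((3:ℂ)/2 - (-1) ^ n / 2) := by
    funext n
    rw [smul_eq_mul, neg_pow]
    ring
  rw [he] at h3
  have : gFun t = 3/2 * (1 - t)⁻¹ - 1/2 * (1 - -t)⁻¹ := by
    unfold gFun
    ring_nf
  rw [this]
  exact h3

lemma gFun_differentiableAt {z : ℂ} (h1 : (1:ℂ) - z ≠ 0) (h2 : (1:ℂ) + z ≠ 0) :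
    DifferentiableAt ℂ gFun z := by
  apply DifferentiableAt.sub
  · exact (differentiableAt_const _).mul
      (((differentiableAt_const (1:ℂ)).sub differentiableAt_id).inv h1)
  · exact (differentiableAt_const _).mul
      (((differentiableAt_const (1:ℂ)).add differentiableAt_id).inv h2)

lemma coeff3 (n : ℕ) :
    ((Real.Gamma (1 + (n : ℝ) / 1) : ℂ))⁻¹ • (((n.factorial : ℝ) / mExample n : ℝ) : ℂ)
      = (3:ℂ)/2 - (-1) ^ n / 2 := by
  rw [div_one, add_comm, Real.Gamma_nat_eq_factorial, smul_eq_mul]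
  have hfac : ((n.factorial : ℂ)) ≠ 0 := Nat.cast_ne_zero.mpr n.factorial_ne_zero
  rcases Nat.even_or_odd n with he | ho
  · rw [he.neg_one_pow]
    have : mExample n = 1 := by simp [mExample, he]
    rw [this]
    push_cast
    rw [div_one, inv_mul_cancel₀ hfac]
    norm_num
  · rw [ho.neg_one_pow]
    have : mExample n = 1/2 := by simp [mExample, Nat.not_even_iff_odd.mpr ho]
    rw [this]
    push_cast
    field_simp
    norm_num

lemma not_summable_iii :
    ¬ KSummable 1 π (fun n : ℕ => (((n.factorial : ℝ) / mExample n : ℝ) : ℂ)) := by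
  intro h
  have hπ := Real.pi_pos
  unfold KSummable at h
  simp only [coeff3] at h
  obtain ⟨α, r, hα, hα2, hr, f, hdiff, hgrow, ρ, hρ, hρr, hsum⟩ := h
  -- the cone around the negative real axis
  set γ : ℝ := min (α/4) (π/4) with hγ
  have hγ0 : 0 < γ := lt_min (by linarith) (by linarith)
  have hγ2 : γ ≤ π/4 := min_le_right _ _
  have hγα : γ < α/2 := lt_of_le_of_lt (min_le_left _ _) (by linarith)
  set c : ℝ := Real.tan γ with hc
  have hc0 : 0 < c := Real.tan_pos_of_pos_of_lt_pi_div_two hγ0 (by linarith)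
  set ρ₀ : ℝ := min ρ (1/2) with hρ₀
  have hρ₀0 : 0 < ρ₀ := lt_min hρ (by norm_num)
  have hρ₀h : ρ₀ ≤ 1/2 := min_le_right _ _
  have hρ₀ρ : ρ₀ ≤ ρ := min_le_left _ _
  set N : Set ℂ := {z : ℂ | -1 < z.re ∧ z.re < 0 ∧ |z.im| < c * (-z.re)} with hN
  set U : Set ℂ := Metric.ball (0:ℂ) ρ₀ ∪ N with hU
  have hNopen : IsOpen N := by
    have h1 : IsOpen {z : ℂ | -1 < z.re} := isOpen_lt continuous_const Complex.continuous_re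
    have h2 : IsOpen {z : ℂ | z.re < 0} := isOpen_lt Complex.continuous_re continuous_const
    have h3 : IsOpen {z : ℂ | |z.im| < c * (-z.re)} :=
      isOpen_lt (continuous_abs.comp Complex.continuous_im)
        (continuous_const.mul Complex.continuous_re.neg)
    exact h1.inter (h2.inter h3)
  have hNconv : Convex ℝ N := by
    have e : N = {z : ℂ | -1 < z.re} ∩ ({z : ℂ | z.re < 0} ∩
        ({z : ℂ | z.im + c * z.re < 0} ∩ {z : ℂ | -z.im + c * z.re < 0})) := by
      ext z
      simp only [hN, Set.mem_setOf_eq, Set.mem_inter_iff, abs_lt]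
      constructor
      · rintro ⟨h1, h2, h3, h4⟩; exact ⟨h1, h2, by linarith, by linarith⟩
      · rintro ⟨h1, h2, h3, h4⟩; exact ⟨h1, h2, by linarith, by linarith⟩
    rw [e]
    have lre : IsLinearMap ℝ (fun z : ℂ => z.re) :=
      ⟨fun x y => Complex.add_re x y, fun r x => Complex.smul_re r x⟩
    have l1 : IsLinearMap ℝ (fun z : ℂ => z.im + c * z.re) := by
      refine ⟨fun x y => ?_, fun r x => ?_⟩
      · simp only [Complex.add_re, Complex.add_im]; ring
      · simp only [Complex.smul_re, Complex.smul_im, smul_eq_mul]; ring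
    have l2 : IsLinearMap ℝ (fun z : ℂ => -z.im + c * z.re) := by
      refine ⟨fun x y => ?_, fun r x => ?_⟩
      · simp only [Complex.add_re, Complex.add_im]; ring
      · simp only [Complex.smul_re, Complex.smul_im, smul_eq_mul]; ring
    exact (convex_halfSpace_gt lre (-1)).inter ((convex_halfSpace_lt lre 0).inter
      ((convex_halfSpace_lt l1 0).inter (convex_halfSpace_lt l2 0)))
  have hUopen : IsOpen U := Metric.isOpen_ball.union hNopen
  have hx₀ball : (-(((ρ₀:ℝ)/2 : ℝ)) : ℂ) ∈ Metric.ball (0:ℂ) ρ₀ := by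
    rw [Metric.mem_ball, dist_zero_right]
    rw [norm_neg, Complex.norm_real, Real.norm_eq_abs, abs_of_pos (by linarith)]
    linarith
  have hx₀N : (-(((ρ₀:ℝ)/2 : ℝ)) : ℂ) ∈ N := by
    refine ⟨?_, ?_, ?_⟩ <;> simp <;> [linarith; linarith; positivity]
  have hUconn : IsPreconnected U :=
    (convex_ball (0:ℂ) ρ₀).isPreconnected.union _ hx₀ball hx₀N hNconv.isPreconnected
  have hNsub : N ⊆ Sector π α := by
    rintro z ⟨h1, h2, h3⟩
    exact cone_mem_sector hγ0 hγ2 hγα h2 h3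
  have hUsub : U ⊆ DiscSector π α r := by
    rintro z (hz | hz)
    · exact Or.inr (Metric.ball_subset_ball (le_trans hρ₀ρ hρr) hz)
    · exact Or.inl (hNsub hz)
  have hUne : ∀ z ∈ U, (1:ℂ) - z ≠ 0 ∧ (1:ℂ) + z ≠ 0 := by
    rintro z (hz | hz)
    · rw [Metric.mem_ball, dist_zero_right] at hz
      have hz1 : ‖z‖ < 1 := by linarith
      constructor
      · intro hcon
        have : z = 1 := by linear_combination -hcon
        rw [this] at hz1; simp at hz1
      · intro hcon
        have : z = -1 := by linear_combination hcon - (2:ℂ)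
        rw [this] at hz1; simp at hz1
    · obtain ⟨h1, h2, _⟩ := hz
      constructor
      · intro hcon
        have : ((1:ℂ) - z).re = 0 := by rw [hcon]; rfl
        simp [Complex.sub_re] at this; linarith
      · intro hcon
        have : ((1:ℂ) + z).re = 0 := by rw [hcon]; rfl
        simp [Complex.add_re] at this; linarith
  have hf_an : AnalyticOnNhd ℂ f U := (hdiff.mono hUsub).analyticOnNhd hUopen
  have hg_an : AnalyticOnNhd ℂ gFun U := by
    apply DifferentiableOn.analyticOnNhd _ hUopen
    intro z hz
    exact (gFun_differentiableAt (hUne z hz).1 (hUne z hz).2).differentiableWithinAt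
  have hfg0 : f =ᶠ[nhds (0:ℂ)] gFun := by
    filter_upwards [Metric.ball_mem_nhds (0:ℂ) hρ₀0] with t ht
    have h1 := hsum t (Metric.ball_subset_ball hρ₀ρ ht)
    rw [Metric.mem_ball, dist_zero_right] at ht
    exact h1.unique (gFun_hasSum (by linarith))
  have hEq : Set.EqOn f gFun U :=
    hf_an.eqOn_of_preconnected_of_eventuallyEq hg_an hUconn
      (Or.inl (Metric.mem_ball_self hρ₀0)) hfg0
  -- growth bound gives contradiction near -1
  obtain ⟨A, B, hA, hB, hbound⟩ := hgrow (α/2) ⟨by linarith, by linarith⟩ (r/2)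
    ⟨by linarith, by linarith⟩
  set M : ℝ := A * Real.exp B with hM
  have hM0 : 0 < M := mul_pos hA (Real.exp_pos B)
  set ε : ℝ := min (1/2) (1/(4*(M+2))) with hε
  have hε0 : 0 < ε := lt_min (by norm_num) (by positivity)
  have hεh : ε ≤ 1/2 := min_le_left _ _
  have hεM : ε ≤ 1/(4*(M+2)) := min_le_right _ _
  set s : ℝ := 1 - ε with hs
  have hs0 : 0 < s := by rw [hs]; linarith
  have hs1 : s < 1 := by rw [hs]; linarith
  set x : ℂ := -((s:ℝ) : ℂ) with hx
  have hxsec : x ∈ Sector π (α/2) := neg_real_mem_sector (by linarith) hs0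
  have hxabs : ‖x‖ = s := by
    rw [hx, norm_neg, Complex.norm_real, Real.norm_eq_abs, abs_of_pos hs0]
  have hxb : ‖f x‖ ≤ M := by
    have h1 := hbound x (Or.inl hxsec)
    rw [hxabs, Real.rpow_one] at h1
    refine h1.trans ?_
    rw [hM]
    have : Real.exp (B * s) ≤ Real.exp B := by
      rw [Real.exp_le_exp]; nlinarith
    nlinarith [Real.exp_pos (B * s)]
  have hxN : x ∈ N := by
    refine ⟨?_, ?_, ?_⟩ <;> simp [hx]
    · linarith
    · exact hs0
    · positivity
  have hgx : gFun x = (((3:ℝ)/2 * (1+s)⁻¹ - (1/2) * (1-s)⁻¹ : ℝ) : ℂ) := by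
    rw [hx]
    unfold gFun
    have h1 : (1:ℂ) - (-((s:ℝ):ℂ)) = (((1+s : ℝ)) : ℂ) := by push_cast; ring
    have h2 : (1:ℂ) + (-((s:ℝ):ℂ)) = (((1-s : ℝ)) : ℂ) := by push_cast; ring
    rw [h1, h2]
    push_cast
    ring
  have hlow : M < ‖gFun x‖ := by
    rw [hgx, Complex.norm_real, Real.norm_eq_abs]
    have h3 : (1:ℝ) - s = ε := by rw [hs]; ring
    have hεinv : 4*(M+2) ≤ ε⁻¹ := by
      rw [← one_div, le_div_iff₀ hε0]
      calc 4*(M+2)*ε ≤ 4*(M+2)*(1/(4*(M+2))) := by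
            apply mul_le_mul_of_nonneg_left hεM (by positivity)
        _ = 1 := by field_simp
    have h4 : (1/2:ℝ) * (1-s)⁻¹ ≥ 2*(M+2) := by
      rw [h3]; linarith
    have h5 : (3:ℝ)/2 * (1+s)⁻¹ ≤ 3/2 := by
      have : (1+s)⁻¹ ≤ 1 := by
        rw [inv_le_one_iff₀]; right; linarith
      linarith
    have h6 : (3:ℝ)/2 * (1+s)⁻¹ ≥ 0 := by positivity
    calc M < 2*(M+2) - 3/2 := by linarith
      _ ≤ (1/2) * (1-s)⁻¹ - 3/2*(1+s)⁻¹ := by linarith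
      _ ≤ |(3:ℝ)/2 * (1+s)⁻¹ - (1/2) * (1-s)⁻¹| := by
          rw [abs_sub_comm]
          exact le_trans (by linarith) (le_abs_self _)
  rw [hEq (Or.inr hxN)] at hxb
  linarith

/-- `mExample` is a sequence of order `0`; `Σ n! tⁿ` is `1`-summable in the
direction `π`, but `Σ (n!/m(n)) tⁿ` is not; consequently `mExample` does not preserve
summability. -/
theorem stmt17 :
    (∃ a A : ℝ, 0 < a ∧ 0 < A ∧ ∀ n : ℕ, a ^ n ≤ mExample n ∧ mExample n ≤ A ^ n) ∧
    KSummable 1 π (fun n : ℕ => ((n.factorial : ℝ) : ℂ)) ∧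
    ¬ KSummable 1 π (fun n : ℕ => (((n.factorial : ℝ) / mExample n : ℝ) : ℂ)) ∧
    ¬ PreservesSummability mExample := by
  refine ⟨⟨1/2, 1, by norm_num, by norm_num, fun n => ⟨?_, ?_⟩⟩, summable_factorial,
    not_summable_iii, ?_⟩
  · rcases Nat.even_or_odd n with he | ho
    · have : mExample n = 1 := by simp [mExample, he]
      rw [this]
      exact pow_le_one₀ (by norm_num) (by norm_num)
    · have h1 : mExample n = 1/2 := by simp [mExample, Nat.not_even_iff_odd.mpr ho]
      rw [h1]
      have h2 : (1:ℕ) ≤ n := ho.pos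
      calc ((1:ℝ)/2) ^ n ≤ (1/2) ^ 1 :=
            pow_le_pow_of_le_one (by norm_num) (by norm_num) h2
        _ = 1/2 := pow_one _
  · have h1 : mExample n ≤ 1 := by
      unfold mExample; split <;> norm_num
    rw [one_pow]
    exact h1
  · intro hpres
    have h := hpres 1 π one_pos ℂ (fun n : ℕ => ((n.factorial : ℝ) : ℂ))
    have heq : (fun n : ℕ => ((mExample n : ℂ))⁻¹ • (((n.factorial : ℝ) : ℂ)))
        = fun n : ℕ => (((n.factorial : ℝ) / mExample n : ℝ) : ℂ) := by
      funext n
      rw [smul_eq_mul]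
      push_cast
      rw [inv_mul_eq_div]
    exact not_summable_iii (heq ▸ (h.mp summable_factorial))
end
end
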